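/- arXiv:2406.03693 — 6 statements merged into one kernel-verified Lean document; each statement's English description precedes it below -/
import Mathlib

section
/- The code C_k(A,v) with v = (1,…,1) is the extended code of C_4 with respect to the vector w: explicitly, C_k(A,1) = { (c_1, …, c_{n+1}, Σ_{i=1}^{n+1} w_i c_i) : (c_1,…,c_{n+1}) ∈ C_4 }, where w_i = α_i^{n−k+1} · Π_{1≤j≤n, j≠i} (α_i − α_j)^{−1} for 1 ≤ i ≤ n, and w_{n+1} = δ − (Σ_{i=1}^n α_i)^2 + Σ_{1≤i<j≤n} α_i α_j. -/
/-!
The map `c ↦ (c, ∑ wᵢ cᵢ)` is linear, so it sends the span of the rows of `G_4` onto the span of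
their images, and it suffices to check that it sends each row of `G_4` to the corresponding row of
`G_k`. The new entries are sums `∑ᵢ αᵢ^t / ∏_{j ≠ i} (αᵢ - αⱼ)`, i.e. the coefficient of `X^{n-1}`
in the interpolant of `X^t` at the nodes. For `t < n` this is `[t = n - 1]`; for `t = n + 1` the
interpolant is `X^{n+1} - (X + e₁) ∏ⱼ (X - αⱼ)`, whose coefficient of `X^{n-1}` is `e₁² - e₂`,
which cancels against the last entry of `w`.
-/

/-- The k×(n+1) matrix `G_4`: for `1 ≤ i ≤ k-1` the `i`-th row is
`(α_1^{i-1}, …, α_n^{i-1}, 0)`, and the `k`-th row is `(α_1^k, …, α_n^k, 1)`. -/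
noncomputable def G4mat (F : Type*) [Field F] (n k : ℕ) (α : Fin n → F) :
    Fin k → Fin (n + 1) → F := fun i j =>
  if hj : (j : ℕ) < n then α ⟨j, hj⟩ ^ (if (i : ℕ) = k - 1 then k else (i : ℕ))
  else if (i : ℕ) = k - 1 then 1 else 0

/-- The k×(n+2) matrix `G_k` with all multipliers `v_i = 1`: for `1 ≤ i ≤ k-2` the `i`-th row is
`(α_1^{i-1}, …, α_n^{i-1}, 0, 0)`, the `(k-1)`-th row is `(α_1^{k-2}, …, α_n^{k-2}, 0, 1)`,
and the `k`-th row is `(α_1^k, …, α_n^k, 1, δ)`. -/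
noncomputable def Gkmat1 (F : Type*) [Field F] (n k : ℕ) (α : Fin n → F) (δ : F) :
    Fin k → Fin (n + 2) → F := fun i j =>
  if hj : (j : ℕ) < n then α ⟨j, hj⟩ ^ (if (i : ℕ) = k - 1 then k else (i : ℕ))
  else if (j : ℕ) = n then (if (i : ℕ) = k - 1 then 1 else 0)
  else if (i : ℕ) = k - 2 then 1 else if (i : ℕ) = k - 1 then δ else 0

/-- The extension vector `w`: `w_i = α_i^{n-k+1} · ∏_{j ≠ i} (α_i - α_j)⁻¹` for `1 ≤ i ≤ n`,
and `w_{n+1} = δ - (∑ α_i)² + ∑_{i<j} α_i α_j`. -/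
noncomputable def wvec (F : Type*) [Field F] (n k : ℕ) (α : Fin n → F) (δ : F) :
    Fin (n + 1) → F := fun i =>
  if hi : (i : ℕ) < n then
    α ⟨i, hi⟩ ^ (n - k + 1) * ∏ j ∈ Finset.univ.erase ⟨i, hi⟩, (α ⟨i, hi⟩ - α j)⁻¹
  else δ - (∑ i, α i) ^ 2 + ∑ i, ∑ j ∈ Finset.Ioi i, α i * α j

open Polynomial Finset

theorem Finset.sum_powersetCard_two_prod {ι R : Type*} [Fintype ι] [LinearOrder ι]
    [LocallyFiniteOrderTop ι] [CommSemiring R] (f : ι → R) :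
    ∑ t ∈ univ.powersetCard 2, ∏ i ∈ t, f i = ∑ i, ∑ j ∈ Ioi i, f i * f j := by
  rw [sum_sigma']
  refine (sum_bij (fun x _ => {x.1, x.2}) ?_ ?_ ?_ ?_).symm
  · rintro ⟨i, j⟩ h
    simp only [mem_sigma, mem_Ioi] at h
    simp [card_pair h.2.ne]
  · rintro ⟨i, j⟩ h ⟨i', j'⟩ h' he
    simp only [mem_sigma, mem_univ, mem_Ioi, true_and] at h h'
    have hset := congrArg ((↑) : Finset ι → Set ι) he
    simp only [coe_pair, Set.pair_eq_pair_iff] at hset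
    rcases hset with ⟨rfl, rfl⟩ | ⟨rfl, rfl⟩
    · rfl
    · exact absurd (h.trans h') (lt_irrefl _)
  · intro t ht
    obtain ⟨x, y, hxy, rfl⟩ := card_eq_two.mp (mem_powersetCard.mp ht).2
    rcases hxy.lt_or_gt with h | h
    · exact ⟨⟨x, y⟩, by simpa using h, rfl⟩
    · exact ⟨⟨y, x⟩, by simpa using h, pair_comm _ _⟩
  · rintro ⟨i, j⟩ h
    simp only [mem_sigma, mem_Ioi] at h
    exact (prod_pair h.2.ne).symm

section
variable {R : Type*} [CommRing R]

theorem Polynomial.Monic.degree_X_pow_sub_mul_X_sub_C_lt {P : R[X]} {m : ℕ} (hP : P.Monic)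
    (hdeg : P.natDegree = m + 2) :
    (X ^ (m + 3) - P * (X - C (P.coeff (m + 1)))).degree < ↑(m + 2) := by
  have hlead : P.coeff (m + 2) = 1 := hdeg ▸ hP.coeff_natDegree
  have hhigh : ∀ l, m + 2 < l → P.coeff l = 0 := fun l hl =>
    coeff_eq_zero_of_natDegree_lt (hdeg ▸ hl)
  rw [degree_lt_iff_coeff_zero]
  intro l hl
  obtain ⟨i, rfl⟩ : ∃ i, l = i + 1 := ⟨l - 1, by omega⟩
  rw [coeff_sub, coeff_mul_X_sub_C, coeff_X_pow]
  rcases (show i = m + 1 ∨ i = m + 2 ∨ m + 2 < i by omega) with rfl | rfl | hi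
  · simp [hlead]
  · simp [hlead, hhigh]
  · rw [if_neg (by omega), hhigh i hi, hhigh (i + 1) (by omega)]
    ring

theorem Polynomial.coeff_X_pow_sub_mul_X_sub_C (P : R[X]) (m : ℕ) :
    (X ^ (m + 3) - P * (X - C (P.coeff (m + 1)))).coeff (m + 1)
      = P.coeff (m + 1) ^ 2 - P.coeff m := by
  rw [coeff_sub, coeff_mul_X_sub_C, coeff_X_pow, if_neg (by omega)]
  ring

theorem Lagrange.coeff_nodal_card_sub_two {ι : Type*} {s : Finset ι} (v : ι → R) (hs : 2 ≤ #s) :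
    (nodal s v).coeff (#s - 2) = ∑ t ∈ s.powersetCard 2, ∏ i ∈ t, v i := by
  have h := Finset.prod_X_add_C_coeff s (fun i => -v i) (k := #s - 2) (by omega)
  simp only [map_neg, ← sub_eq_add_neg, Nat.sub_sub_self hs] at h
  rw [nodal_eq, h]
  refine sum_congr rfl fun t ht => ?_
  rw [prod_neg, (mem_powersetCard.mp ht).2]
  simp

end

section
variable {F ι : Type*} [Field F] [DecidableEq ι] {s : Finset ι} {v : ι → F}

theorem Lagrange.sum_pow_div_prod_sub_of_lt (hvs : Set.InjOn v s) {t : ℕ} (ht : t < #s) :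
    ∑ i ∈ s, v i ^ t / ∏ j ∈ s.erase i, (v i - v j) = if t = #s - 1 then 1 else 0 := by
  have hdeg : (X ^ t : F[X]).degree < #s := by
    rw [degree_X_pow]
    exact_mod_cast ht
  simpa [coeff_X_pow, eq_comm] using (coeff_eq_sum hvs hdeg).symm

theorem Lagrange.sum_pow_card_add_one_div_prod_sub (hvs : Set.InjOn v s) (hs : 2 ≤ #s) :
    ∑ i ∈ s, v i ^ (#s + 1) / ∏ j ∈ s.erase i, (v i - v j)
      = (∑ i ∈ s, v i) ^ 2 - ∑ t ∈ s.powersetCard 2, ∏ i ∈ t, v i := by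
  obtain ⟨m, hm⟩ : ∃ m, #s = m + 2 := ⟨#s - 2, by omega⟩
  have hdeg : (nodal s v).natDegree = m + 2 := by rw [natDegree_nodal, hm]
  have hc1 : (nodal s v).coeff (m + 1) = -∑ i ∈ s, v i := by
    rw [nodal_eq]
    simpa [hm] using prod_X_sub_C_coeff_card_pred s v (by omega)
  have hc2 : (nodal s v).coeff m = ∑ t ∈ s.powersetCard 2, ∏ i ∈ t, v i := by
    simpa [hm] using coeff_nodal_card_sub_two v hs
  have h := coeff_eq_sum hvs (hm ▸ nodal_monic.degree_X_pow_sub_mul_X_sub_C_lt hdeg)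
  rw [hm, show m + 2 - 1 = m + 1 by omega, coeff_X_pow_sub_mul_X_sub_C, hc1, hc2, neg_sq] at h
  rw [h, hm]
  refine sum_congr rfl fun i hi => ?_
  simp [eval_nodal_at_node hi]

end

section
variable {F : Type*} [Field F] {m : ℕ}

def snocLinearMap (φ : Module.Dual F (Fin m → F)) : (Fin m → F) →ₗ[F] Fin (m + 1) → F where
  toFun c := Fin.snoc c (φ c)
  map_add' c d := by
    funext j
    refine Fin.lastCases ?_ (fun j => ?_) j <;> simp
  map_smul' a c := by
    funext j
    refine Fin.lastCases ?_ (fun j => ?_) j <;> simp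

theorem snocLinearMap_apply (φ : Module.Dual F (Fin m → F)) (c : Fin m → F) :
    snocLinearMap φ c = Fin.snoc c (φ c) := rfl

end

section
variable {F : Type*} [Field F] {n k : ℕ} {α : Fin n → F} {δ : F}

theorem wvec_castSucc (j : Fin n) :
    wvec F n k α δ j.castSucc = α j ^ (n - k + 1) / ∏ l ∈ univ.erase j, (α j - α l) := by
  simp [wvec, div_eq_mul_inv]

theorem wvec_last :
    wvec F n k α δ (Fin.last n) = δ - (∑ i, α i) ^ 2 + ∑ i, ∑ j ∈ Ioi i, α i * α j := by
  simp [wvec]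

theorem G4mat_castSucc (i : Fin k) (j : Fin n) :
    G4mat F n k α i j.castSucc = α j ^ (if (i : ℕ) = k - 1 then k else (i : ℕ)) := by
  simp [G4mat]

theorem G4mat_last (i : Fin k) :
    G4mat F n k α i (Fin.last n) = if (i : ℕ) = k - 1 then 1 else 0 := by
  simp [G4mat]

theorem Gkmat1_eq_snoc (i : Fin k) :
    Gkmat1 F n k α δ i = Fin.snoc (G4mat F n k α i)
      (if (i : ℕ) = k - 2 then 1 else if (i : ℕ) = k - 1 then δ else 0) := by
  funext j
  refine Fin.lastCases ?_ (fun j => ?_) j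
  · simp [Gkmat1]
  · refine Fin.lastCases ?_ (fun j => ?_) j <;> simp [Gkmat1, G4mat]

theorem sum_wvec_mul_G4mat (hk : 2 ≤ k) (hkn : k ≤ n) (hα : Function.Injective α) (i : Fin k) :
    ∑ j, wvec F n k α δ j * G4mat F n k α i j =
      if (i : ℕ) = k - 2 then 1 else if (i : ℕ) = k - 1 then δ else 0 := by
  have hnodes : Set.InjOn α (univ : Finset (Fin n)) := hα.injOn
  have hcard : #(univ : Finset (Fin n)) = n := card_fin n
  set e := if (i : ℕ) = k - 1 then k else (i : ℕ)
  have hsplit : ∑ j, wvec F n k α δ j * G4mat F n k α i j =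
      ∑ j, α j ^ (e + (n - k + 1)) / ∏ l ∈ univ.erase j, (α j - α l) +
        wvec F n k α δ (Fin.last n) * (if (i : ℕ) = k - 1 then 1 else 0) := by
    rw [Fin.sum_univ_castSucc, G4mat_last]
    congr 1
    refine sum_congr rfl fun j _ => ?_
    rw [wvec_castSucc, G4mat_castSucc, pow_add]
    ring
  rw [hsplit]
  by_cases hi : (i : ℕ) = k - 1
  · rw [show e + (n - k + 1) = #(univ : Finset (Fin n)) + 1 by simp [e, hi, hcard]; omega,
      Lagrange.sum_pow_card_add_one_div_prod_sub hnodes (by omega), sum_powersetCard_two_prod,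
      wvec_last, if_pos hi, if_neg (by omega), if_pos hi]
    ring
  · have hexp : e + (n - k + 1) = #(univ : Finset (Fin n)) - 1 ↔ (i : ℕ) = k - 2 := by
      simp only [e, if_neg hi, hcard]
      omega
    rw [Lagrange.sum_pow_div_prod_sub_of_lt hnodes (by simp [e, hi, hcard]; omega), if_neg hi,
      if_neg hi, mul_zero, add_zero]
    exact if_congr hexp rfl rfl

end

theorem stmt_0_general (F : Type*) [Field F] (n k : ℕ)
    (hk : 3 ≤ k) (hkn : k ≤ n)
    (α : Fin n → F) (hα : Function.Injective α) (δ : F) :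
    (Submodule.span F (Set.range (Gkmat1 F n k α δ)) : Set (Fin (n + 2) → F)) =
      { y : Fin (n + 2) → F | ∃ c ∈ Submodule.span F (Set.range (G4mat F n k α)),
          y = Fin.snoc c (∑ i, wvec F n k α δ i * c i) } := by
  let extend := snocLinearMap (dotProductEquiv F (Fin (n + 1)) (wvec F n k α δ))
  have hrows : Gkmat1 F n k α δ = extend ∘ G4mat F n k α := by
    funext i
    rw [Gkmat1_eq_snoc, Function.comp_apply, snocLinearMap_apply, dotProductEquiv_apply_apply,
      dotProduct, sum_wvec_mul_G4mat (by omega) hkn hα]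
  rw [hrows, Set.range_comp, ← Submodule.map_span, Submodule.map_coe]
  ext y
  simp [extend, snocLinearMap_apply, dotProduct, eq_comm]

/-- `C_k(A,1)` is the extended code of `C_4` with respect to the vector `w`. -/
theorem stmt_0 (F : Type*) [Field F] [Fintype F] (n k : ℕ)
    (hk : 3 ≤ k) (hkn : k ≤ n) (hnq : n ≤ Fintype.card F)
    (α : Fin n → F) (hα : Function.Injective α) (δ : F) :
    (Submodule.span F (Set.range (Gkmat1 F n k α δ)) : Set (Fin (n + 2) → F)) =
      { y : Fin (n + 2) → F | ∃ c ∈ Submodule.span F (Set.range (G4mat F n k α)),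
          y = Fin.snoc c (∑ i, wvec F n k α δ i * c i) } :=
  stmt_0_general F n k hk hkn α hα δ
end

section
/- Let u_i = Π_{1≤j≤n, j≠i}(α_i − α_j)^{−1}, v_i' = u_i v_i^{−1} for 1 ≤ i ≤ n, a = −Σ_{i=1}^n α_i, and b = δ + Σ_{1≤i<j≤n} α_i α_j − (Σ_{i=1}^n α_i)^2. Then the (n−k+2)×(n+2) matrix H whose t-th row, for 1 ≤ t ≤ n−k−1, is (v_1' α_1^{t−1}, …, v_n' α_n^{t−1}, 0, 0), whose (n−k)-th row is (v_1' α_1^{n−k−1}, …, v_n' α_n^{n−k−1}, −1, 0), whose (n−k+1)-th row is (v_1' α_1^{n−k}, …, v_n' α_n^{n−k}, a, 0), and whose (n−k+2)-th row is (v_1' α_1^{n−k+1}, …, v_n' α_n^{n−k+1}, b, −1), is a parity-check matrix of C_k(A,v): H has rank n−k+2 and the row space of H equals the Euclidean dual code C_k(A,v)^⊥. -/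
/-- The Euclidean dual of a code `C ⊆ F^N`. -/
def dualCode {F : Type*} [Field F] {N : ℕ} (C : Submodule F (Fin N → F)) :
    Submodule F (Fin N → F) where
  carrier := { y | ∀ x ∈ C, ∑ i, x i * y i = 0 }
  zero_mem' := fun x _ => by simp
  add_mem' := fun {a b} ha hb x hx => by
    have h : ∑ i, x i * (a + b) i = (∑ i, x i * a i) + ∑ i, x i * b i := by
      rw [← Finset.sum_add_distrib]
      exact Finset.sum_congr rfl fun i _ => by simp [mul_add]
    rw [h, ha x hx, hb x hx, add_zero]
  smul_mem' := fun c {a} ha x hx => by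
    have h : ∑ i, x i * (c • a) i = c * ∑ i, x i * a i := by
      rw [Finset.mul_sum]
      exact Finset.sum_congr rfl fun i _ => by
        simp only [Pi.smul_apply, smul_eq_mul]; ring
    rw [h, ha x hx, mul_zero]

/-- The k×(n+2) generator matrix `G_k` of `C_k(A,v)`. -/
noncomputable def Gkmat (F : Type*) [Field F] (n k : ℕ) (α v : Fin n → F) (δ : F) :
    Fin k → Fin (n + 2) → F := fun i j =>
  if hj : (j : ℕ) < n then v ⟨j, hj⟩ * α ⟨j, hj⟩ ^ (if (i : ℕ) = k - 1 then k else (i : ℕ))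
  else if (j : ℕ) = n then (if (i : ℕ) = k - 1 then 1 else 0)
  else if (i : ℕ) = k - 2 then 1 else if (i : ℕ) = k - 1 then δ else 0

/-- The (n-k+2)×(n+2) matrix `H` of the theorem: its `t`-th row (1-based), for
`1 ≤ t ≤ n-k-1`, is `(v'_1 α_1^{t-1}, …, v'_n α_n^{t-1}, 0, 0)`; the `(n-k)`-th row is
`(v'_1 α_1^{n-k-1}, …, v'_n α_n^{n-k-1}, -1, 0)`; the `(n-k+1)`-th row is
`(v'_1 α_1^{n-k}, …, v'_n α_n^{n-k}, a, 0)`; and the `(n-k+2)`-th row is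
`(v'_1 α_1^{n-k+1}, …, v'_n α_n^{n-k+1}, b, -1)`, where `v'_i = u_i v_i⁻¹`,
`u_i = ∏_{j≠i}(α_i - α_j)⁻¹`, `a = -∑ α_i` and `b = δ + ∑_{i<j} α_i α_j - (∑ α_i)²`.
(The indexing is expressed additively to avoid truncated subtraction.) -/
noncomputable def Hmat (F : Type*) [Field F] (n k : ℕ) (α v : Fin n → F) (δ : F) :
    Fin (n - k + 2) → Fin (n + 2) → F := fun t j =>
  if hj : (j : ℕ) < n then
    (∏ l ∈ Finset.univ.erase ⟨j, hj⟩, (α ⟨j, hj⟩ - α l)⁻¹) * (v ⟨j, hj⟩)⁻¹ * α ⟨j, hj⟩ ^ (t : ℕ)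
  else if (j : ℕ) = n then
    (if (t : ℕ) + k + 1 = n then -1
     else if (t : ℕ) + k = n then -(∑ i, α i)
     else if (t : ℕ) + k = n + 1 then
       δ + (∑ i, ∑ l ∈ Finset.Ioi i, α i * α l) - (∑ i, α i) ^ 2
     else 0)
  else (if (t : ℕ) + k = n + 1 then -1 else 0)


/-!
With the nodal weights `w_j = ∏_{l ≠ j} (α_j - α_l)⁻¹`, Lagrange interpolation gives
`∑_j w_j P(α_j) = [X^{n-1}] P` whenever `deg P < n`. Hence the power sums
`S_m = ∑_j w_j α_j^m` vanish for `m < n - 1` and `S_{n-1} = 1`, and reducing `X^n` and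
`X^{n+1}` modulo `∏_i (X - α_i)` gives `S_n = e₁` and `S_{n+1} = e₁² - e₂`. The entries of the
last two columns of `H` are `δ S_{t+k-2} - S_{t+k}` and `-S_{t+k-2}`, and with this the inner
product of any row of `G_k` with any row of `H` cancels. Both matrices have independent rows
(Vandermonde), and `(n - k + 2) + k = n + 2` forces the row space of `H` to be all of
`C_k(A,v)^⊥`.
-/

open Polynomial Finset Lagrange

section PowerSums

variable {F : Type*} [Field F] {n : ℕ} {α : Fin n → F}

theorem sum_nodalWeight_mul_eval (hα : Function.Injective α) {P : F[X]}
    (hP : P.degree < n) :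
    ∑ j, nodalWeight univ α j * P.eval (α j) = P.coeff (n - 1) := by
  have := Lagrange.coeff_eq_sum (s := univ) (v := α) hα.injOn (P := P) (by simpa using hP)
  simp only [card_univ, Fintype.card_fin] at this
  rw [this]
  refine sum_congr rfl fun j _ => ?_
  rw [nodalWeight, prod_inv_distrib, div_eq_mul_inv, mul_comm]

theorem sum_nodalWeight_mul_eval_of_natDegree_le (hα : Function.Injective α) (hn : 0 < n)
    {P : F[X]} (hP : P.natDegree ≤ n) :
    ∑ j, nodalWeight univ α j * P.eval (α j) = P.coeff (n - 1) + P.coeff n * ∑ i, α i := by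
  have hN : (nodal univ α).natDegree = n := by simp [natDegree_nodal]
  set Q := P - C (P.coeff n) * nodal univ α
  have hQ : Q.degree < n := by
    rw [degree_lt_iff_coeff_zero]
    intro m hm
    have hm : n ≤ m := by exact_mod_cast hm
    rcases hm.eq_or_lt with rfl | hm
    · have h1 := (nodal_monic (s := univ) (v := α)).coeff_natDegree
      rw [hN] at h1
      simp [Q, h1]
    · simp [Q, coeff_eq_zero_of_natDegree_lt (hP.trans_lt hm),
        coeff_eq_zero_of_natDegree_lt (hN.trans_lt hm)]
  have hQeval : ∀ j, Q.eval (α j) = P.eval (α j) := fun j => by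
    simp [Q, eval_nodal_at_node (mem_univ j)]
  have hN1 : (nodal univ α).coeff (n - 1) = -∑ i, α i := by
    simpa [nodal_eq] using prod_X_sub_C_coeff_card_pred univ α (by simpa using hn)
  simp_rw [← hQeval]
  rw [sum_nodalWeight_mul_eval hα hQ]
  simp [Q, hN1]

/-- The complete homogeneous symmetric polynomial `h_{m-n+1}(α)`, in its Lagrange form. -/
noncomputable def nodalPowerSum (α : Fin n → F) (m : ℕ) : F :=
  ∑ j, nodalWeight univ α j * α j ^ m

theorem nodalPowerSum_of_lt (hα : Function.Injective α) {m : ℕ} (hm : m < n) :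
    nodalPowerSum α m = if m + 1 = n then 1 else 0 := by
  have := sum_nodalWeight_mul_eval hα (P := X ^ m) (by rw [degree_X_pow]; exact_mod_cast hm)
  simp only [eval_pow, eval_X, coeff_X_pow] at this
  rw [nodalPowerSum, this]
  congr 1
  apply propext; omega

theorem nodalPowerSum_self (hα : Function.Injective α) (hn : 0 < n) :
    nodalPowerSum α n = ∑ i, α i := by
  have := sum_nodalWeight_mul_eval_of_natDegree_le hα hn (P := X ^ n) (by simp)
  simp only [eval_pow, eval_X, coeff_X_pow] at this
  rw [nodalPowerSum, this, if_neg (by omega)]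
  simp

theorem coeff_prod_X_sub_C_of_card_eq_add_two {m : ℕ} (a : Fin (m + 2) → F) :
    (∏ i, (X - C (a i))).coeff m = ∑ i, ∑ l ∈ Ioi i, a i * a l := by
  induction m with
  | zero =>
    simp [Fin.prod_univ_two, Fin.sum_univ_two, mul_coeff_zero, ← filter_lt_eq_Ioi, sum_filter]
  | succ m ih =>
    rw [Fin.prod_univ_castSucc, coeff_mul_X_sub_C, ih]
    have h1 := prod_X_sub_C_coeff_card_pred univ (fun i : Fin (m + 2) => a i.castSucc)
      (by simp)
    simp only [card_univ, Fintype.card_fin, show m + 2 - 1 = m + 1 by omega] at h1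
    rw [h1]
    simp only [← filter_lt_eq_Ioi, sum_filter, Fin.sum_univ_castSucc (n := m + 2),
      Fin.castSucc_lt_castSucc_iff, Fin.castSucc_lt_last, (Fin.castSucc_lt_last _).not_gt,
      lt_irrefl, if_true, if_false, add_zero, sum_const_zero, sum_add_distrib, neg_mul,
      sub_neg_eq_add, sum_mul]

theorem nodalPowerSum_succ (hα : Function.Injective α) (hn : 2 ≤ n) :
    nodalPowerSum α (n + 1) = (∑ i, α i) ^ 2 - ∑ i, ∑ l ∈ Ioi i, α i * α l := by
  obtain ⟨m, rfl⟩ : ∃ m, n = m + 2 := ⟨n - 2, by omega⟩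
  have hN1 : (nodal univ α).coeff (m + 1) = -∑ i, α i := by
    simpa [nodal_eq] using prod_X_sub_C_coeff_card_pred univ α (by simp)
  have hN2 : (nodal univ α).coeff m = ∑ i, ∑ l ∈ Ioi i, α i * α l := by
    rw [nodal_eq, coeff_prod_X_sub_C_of_card_eq_add_two]
  -- `X (X^n - N)` has degree `≤ n` and agrees with `X^(n+1)` on the nodes
  set R := X ^ (m + 2) - nodal univ α
  have hR : R.degree < ↑(m + 2) := by
    have := degree_sub_lt_left (p := (X : F[X]) ^ (m + 2)) (q := nodal univ α)
      (by simp [degree_nodal])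
      (by simp) (by simp [nodal_monic.leadingCoeff])
    simpa using this
  have h := sum_nodalWeight_mul_eval_of_natDegree_le hα (by omega) (P := X * R) ?_
  · simp only [R, eval_mul, eval_sub, eval_pow, eval_X, eval_nodal_at_node (mem_univ _), sub_zero,
      coeff_X_mul, ← pow_succ'] at h
    rw [nodalPowerSum, h]
    simp [coeff_X_pow, hN1, hN2]
    ring
  · have hR' : R.natDegree < m + 2 := by
      by_cases h0 : R = 0
      · simp [h0]
      · exact (natDegree_lt_iff_degree_lt h0).2 hR
    exact natDegree_mul_le.trans (by linarith [natDegree_X_le (R := F)])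

end PowerSums

section Matrices

variable {F : Type*} [Field F] {n k : ℕ} {α v : Fin n → F} {δ : F}

@[simp]
theorem Gkmat_castSucc_castSucc (i : Fin k) (j : Fin n) :
    Gkmat F n k α v δ i j.castSucc.castSucc
      = v j * α j ^ (if (i : ℕ) = k - 1 then k else (i : ℕ)) := by
  simp [Gkmat]

@[simp]
theorem Gkmat_castSucc_last (i : Fin k) :
    Gkmat F n k α v δ i (Fin.last n).castSucc = if (i : ℕ) = k - 1 then 1 else 0 := by
  simp [Gkmat]

@[simp]
theorem Gkmat_last (i : Fin k) :
    Gkmat F n k α v δ i (Fin.last (n + 1))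
      = if (i : ℕ) = k - 2 then 1 else if (i : ℕ) = k - 1 then δ else 0 := by
  simp [Gkmat]

@[simp]
theorem Hmat_castSucc_castSucc (t : Fin (n - k + 2)) (j : Fin n) :
    Hmat F n k α v δ t j.castSucc.castSucc
      = nodalWeight univ α j * (v j)⁻¹ * α j ^ (t : ℕ) := by
  simp [Hmat, nodalWeight]

theorem nodalPowerSum_add_sub_two (hk : 2 ≤ k) (hkn : k ≤ n) (hα : Function.Injective α)
    (t : Fin (n - k + 2)) :
    nodalPowerSum α (t + k - 2) = if (t : ℕ) + k = n + 1 then 1 else 0 := by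
  have ht := t.isLt
  rw [nodalPowerSum_of_lt hα (by omega)]
  congr 1
  apply propext; omega

theorem Hmat_castSucc_last (hk : 2 ≤ k) (hkn : k ≤ n) (hα : Function.Injective α)
    (t : Fin (n - k + 2)) :
    Hmat F n k α v δ t (Fin.last n).castSucc
      = δ * nodalPowerSum α (t + k - 2) - nodalPowerSum α (t + k) := by
  have ht := t.isLt
  simp only [Hmat, Fin.val_castSucc, Fin.val_last, lt_irrefl, dif_neg, not_false_eq_true,
    if_true, nodalPowerSum_add_sub_two hk hkn hα]
  obtain h | h | h : (t : ℕ) + k < n ∨ (t : ℕ) + k = n ∨ (t : ℕ) + k = n + 1 := by omega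
  · rw [nodalPowerSum_of_lt hα h]
    split_ifs <;> first | omega | ring
  · rw [h, nodalPowerSum_self hα (by omega)]
    split_ifs <;> first | omega | ring
  · rw [h, nodalPowerSum_succ hα (by omega)]
    split_ifs <;> first | omega | ring

theorem Hmat_last (hk : 2 ≤ k) (hkn : k ≤ n) (hα : Function.Injective α)
    (t : Fin (n - k + 2)) :
    Hmat F n k α v δ t (Fin.last (n + 1)) = -nodalPowerSum α (t + k - 2) := by
  simp [Hmat, nodalPowerSum_add_sub_two hk hkn hα, apply_ite]

end Matrices

section Orthogonality

variable {F : Type*} [Field F] {n k : ℕ} {α v : Fin n → F} {δ : F}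

theorem sum_Gkmat_mul_Hmat (hk : 2 ≤ k) (hkn : k ≤ n) (hα : Function.Injective α)
    (hv : ∀ i, v i ≠ 0) (i : Fin k) (t : Fin (n - k + 2)) :
    ∑ j, Gkmat F n k α v δ i j * Hmat F n k α v δ t j = 0 := by
  have hi := i.isLt
  have ht := t.isLt
  have hnodes : ∀ e : ℕ,
      ∑ j, v j * α j ^ e * (nodalWeight univ α j * (v j)⁻¹ * α j ^ (t : ℕ))
        = nodalPowerSum α (e + t) := fun e => by
    refine sum_congr rfl fun j _ => ?_
    field_simp [hv j]
    ring
  rw [Fin.sum_univ_castSucc, Fin.sum_univ_castSucc]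
  simp only [Gkmat_castSucc_castSucc, Hmat_castSucc_castSucc, Gkmat_castSucc_last, Gkmat_last,
    Hmat_castSucc_last hk hkn hα, Hmat_last hk hkn hα, hnodes]
  -- the last two columns of `H` cancel the power sums of exponent `≥ n - 1`
  by_cases hik : (i : ℕ) = k - 1
  · rw [if_pos hik, if_pos hik, if_pos hik, if_neg (by omega), add_comm k]
    ring
  by_cases hik' : (i : ℕ) = k - 2
  · rw [if_neg hik, if_neg hik, if_pos hik', hik', add_comm (k - 2), Nat.add_sub_assoc hk]
    ring
  rw [if_neg hik, if_neg hik, if_neg hik', if_neg hik, nodalPowerSum_of_lt hα (by omega),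
    if_neg (by omega)]
  ring

end Orthogonality

section Independence

variable {F : Type*} [Field F] {n k : ℕ} {α v : Fin n → F} {δ : F}

theorem eq_zero_of_forall_sum_mul_pow_eq_zero {m : ℕ} (hmn : m ≤ n)
    (hα : Function.Injective α) {c : Fin m → F} (h : ∀ j, ∑ i, c i * α j ^ (i : ℕ) = 0) :
    c = 0 := by
  set P : F[X] := ∑ i, C (c i) * X ^ (i : ℕ)
  have hP : P = 0 := by
    refine eq_zero_of_degree_lt_of_eval_index_eq_zero (s := univ) hα.injOn ?_ fun j _ => ?_
    · simpa using (degree_sum_fin_lt c).trans_le (by exact_mod_cast hmn)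
    · simpa [P, eval_finsetSum] using h j
  funext i
  simpa [P, finsetSum_coeff, coeff_C_mul_X_pow, Fin.val_inj] using congrArg (coeff · i) hP

theorem linearIndependent_Hmat (hk : 2 ≤ k) (hkn : k ≤ n) (hα : Function.Injective α)
    (hv : ∀ i, v i ≠ 0) :
    LinearIndependent F (Hmat F n k α v δ) := by
  rw [Fintype.linearIndependent_iff]
  intro g hg
  refine congrFun (eq_zero_of_forall_sum_mul_pow_eq_zero (by omega) hα fun j => ?_)
  have hj := congrFun hg j.castSucc.castSucc
  simp only [Finset.sum_apply, Pi.smul_apply, smul_eq_mul, Hmat_castSucc_castSucc,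
    Pi.zero_apply] at hj
  have hw : nodalWeight univ α j * (v j)⁻¹ ≠ 0 :=
    mul_ne_zero (nodalWeight_ne_zero hα.injOn (mem_univ j)) (inv_ne_zero (hv j))
  refine (mul_eq_zero.mp ?_).resolve_left hw
  rw [mul_sum, ← hj]
  exact sum_congr rfl fun t _ => by ring

theorem linearIndependent_Gkmat (hk : 2 ≤ k) (hkn : k ≤ n) (hα : Function.Injective α)
    (hv : ∀ i, v i ≠ 0) :
    LinearIndependent F (Gkmat F n k α v δ) := by
  rw [Fintype.linearIndependent_iff]
  intro g hg
  set top : Fin k := ⟨k - 1, by omega⟩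
  have htop : ∀ i : Fin k, (i : ℕ) = k - 1 ↔ i = top := fun i => (Fin.ext_iff (b := top)).symm
  have hg_top : g top = 0 := by
    simpa [htop] using congrFun hg (Fin.last n).castSucc
  -- the exponent `k` of the top row only ever meets the coefficient `g top = 0`
  have hpow : ∀ i j,
      g i * α j ^ (if (i : ℕ) = k - 1 then k else (i : ℕ)) = g i * α j ^ (i : ℕ) := by
    intro i j
    split_ifs with h
    · rw [(htop i).1 h, hg_top, zero_mul, zero_mul]
    · rfl
  refine congrFun (eq_zero_of_forall_sum_mul_pow_eq_zero hkn hα fun j => ?_)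
  have hj := congrFun hg j.castSucc.castSucc
  simp only [Finset.sum_apply, Pi.smul_apply, smul_eq_mul, Gkmat_castSucc_castSucc,
    Pi.zero_apply] at hj
  refine (mul_eq_zero.mp ?_).resolve_left (hv j)
  rw [mul_sum, ← hj]
  exact sum_congr rfl fun i _ => by rw [mul_left_comm (g i), hpow]

end Independence

section DualCode

variable {F : Type*} [Field F] {N : ℕ} {ι : Type*}

theorem mem_dualCode_span_iff (S : ι → Fin N → F) (y : Fin N → F) :
    y ∈ dualCode (Submodule.span F (Set.range S)) ↔ ∀ i, ∑ j, S i j * y j = 0 := by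
  refine ⟨fun hy i => hy _ (Submodule.subset_span ⟨i, rfl⟩), fun hy x hx => ?_⟩
  induction hx using Submodule.span_induction with
  | mem x hx => obtain ⟨i, rfl⟩ := hx; exact hy i
  | zero => simp
  | add x x' _ _ hx hx' => simp [add_mul, sum_add_distrib, hx, hx']
  | smul c x _ hx => simp [mul_assoc, ← mul_sum, hx]

theorem finrank_dualCode_span [Fintype ι] (S : ι → Fin N → F) :
    Module.finrank F (dualCode (Submodule.span F (Set.range S))) = N - (Matrix.of S).rank := by
  have hker :
      dualCode (Submodule.span F (Set.range S)) = LinearMap.ker (Matrix.of S).mulVecLin := by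
    ext y
    simp [mem_dualCode_span_iff, funext_iff, Matrix.mulVec, dotProduct]
  have := LinearMap.finrank_range_add_finrank_ker (Matrix.of S).mulVecLin
  rw [Module.finrank_fin_fun] at this
  rw [hker, Matrix.rank]
  omega

end DualCode

theorem stmt_2_general (F : Type*) [Field F] (n k : ℕ)
    (hk : 3 ≤ k) (hkn : k ≤ n)
    (α v : Fin n → F) (hα : Function.Injective α) (hv : ∀ i, v i ≠ 0) (δ : F) :
    (Matrix.of (Hmat F n k α v δ)).rank = n - k + 2 ∧
      Submodule.span F (Set.range (Hmat F n k α v δ)) =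
        dualCode (Submodule.span F (Set.range (Gkmat F n k α v δ)))  := by
  have hH := linearIndependent_Hmat (δ := δ) (by omega) hkn hα hv
  have hG := linearIndependent_Gkmat (δ := δ) (by omega) hkn hα hv
  have hrankH : (Matrix.of (Hmat F n k α v δ)).rank = n - k + 2 := by
    simpa using LinearIndependent.rank_matrix (M := Matrix.of (Hmat F n k α v δ)) hH
  refine ⟨hrankH, Submodule.eq_of_le_of_finrank_eq ?_ ?_⟩
  · rw [Submodule.span_le]
    rintro _ ⟨t, rfl⟩
    exact (mem_dualCode_span_iff _ _).2 fun i => sum_Gkmat_mul_Hmat (by omega) hkn hα hv i t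
  · rw [finrank_span_eq_card hH, finrank_dualCode_span,
      LinearIndependent.rank_matrix (M := Matrix.of (Gkmat F n k α v δ)) hG]
    simp
    omega

/-- `H` is a parity-check matrix of `C_k(A,v)`: it has rank `n-k+2` and its row space is
the Euclidean dual code `C_k(A,v)^⊥`. -/
theorem stmt_2 (F : Type*) [Field F] [Fintype F] (n k : ℕ)
    (hk : 3 ≤ k) (hkn : k ≤ n) (hnq : n ≤ Fintype.card F)
    (α v : Fin n → F) (hα : Function.Injective α) (hv : ∀ i, v i ≠ 0) (δ : F) :
    (Matrix.of (Hmat F n k α v δ)).rank = n - k + 2 ∧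
      Submodule.span F (Set.range (Hmat F n k α v δ)) =
        dualCode (Submodule.span F (Set.range (Gkmat F n k α v δ))) :=
  stmt_2_general F n k hk hkn α v hα hv δ
end

section
/- The code C_k(A,v) is MDS (i.e., its minimum Hamming distance equals n−k+3) if and only if both of the following hold: (1) for every subset K ⊆ {1,…,n} of size k, Σ_{i∈K} α_i ≠ 0; and (2) for every subset I ⊆ {1,…,n} of size k−1, (Σ_{i∈I} α_i)^2 − Σ_{i<j, i,j∈I} α_i α_j ≠ δ. -/
/-- `minDist C d` : the minimum Hamming distance (= minimum Hamming weight) of the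
linear code `C` equals `d`. -/
def minDist {F : Type*} [Field F] [DecidableEq F] {N : ℕ}
    (C : Submodule F (Fin N → F)) (d : ℕ) : Prop :=
  (∃ c ∈ C, c ≠ 0 ∧ hammingNorm c = d) ∧ ∀ c ∈ C, c ≠ 0 → d ≤ hammingNorm c

/-!
A message `a` corresponds to the polynomial `f = ∑ aᵢ X^{eᵢ}` (`eᵢ = i`, except `e_{k-1} = k`),
i.e. to any `f` of degree `≤ k` without an `X^{k-1}` term, and its codeword is
`(vⱼ f(αⱼ))ⱼ` followed by `f_k` and `f_{k-2} + δ f_k`. The code is MDS iff no nonzero such `f`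
yields `k` zero coordinates. If `f_k = 0` this holds by counting roots. If `f_k ≠ 0` and `f`
vanishes at `αᵢ` for `i ∈ I`, `#I = k - 1`, then the missing `X^{k-1}` term forces
`f = f_k (X + ∑_I αᵢ) ∏_I (X - αᵢ)`. This polynomial has another zero `αⱼ` exactly when
`∑_{I ∪ {j}} α = 0`, and its last coordinate `f_k (e₂(I) - (∑_I αᵢ)² + δ)` vanishes exactly
when condition (2) fails for `I`. The bound is attained by `∏_S (X - αᵢ)` with `#S = k - 2`.
-/

open Polynomial Finset

section GapPoly

variable {ι R : Type*} [CommRing R] (α : ι → R) (I : Finset ι)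

theorem coeff_prod_X_sub_C_mul_X :
    ((∏ i ∈ I, (X - C (α i))) * X).coeff #I = -∑ i ∈ I, α i := by
  rcases I.eq_empty_or_nonempty with rfl | hI
  · simp
  · obtain ⟨m, hm⟩ := Nat.exists_eq_add_one.2 hI.card_pos
    rw [hm, coeff_mul_X, show m = #I - 1 by omega]
    exact prod_X_sub_C_coeff_card_pred I α hI.card_pos

-- The factor `X ^ 2` makes the identity hold also for `#I < 2`, so the induction needs no base
-- cases.
theorem coeff_prod_X_sub_C_mul_X_sq [LinearOrder ι] :
    ((∏ i ∈ I, (X - C (α i))) * X ^ 2).coeff #I =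
      ∑ i ∈ I, ∑ j ∈ I.filter (fun j => i < j), α i * α j := by
  induction I using Finset.induction_on_max with
  | empty => simp
  | insert a I hlt ih =>
    have ha : a ∉ I := fun h => lt_irrefl a (hlt a h)
    have hmax : (insert a I).filter (fun j => a < j) = ∅ :=
      filter_eq_empty_iff.2 fun j hj => by
        rcases mem_insert.1 hj with rfl | hj
        exacts [lt_irrefl j, (hlt j hj).not_gt]
    have hrest : ∀ i ∈ I, ∑ j ∈ (insert a I).filter (fun j => i < j), α i * α j =
        α i * α a + ∑ j ∈ I.filter (fun j => i < j), α i * α j := by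
      intro i hi
      rw [filter_insert, if_pos (hlt i hi), sum_insert (by simp [ha])]
    rw [sum_insert ha, hmax, sum_empty, zero_add, sum_congr rfl hrest, sum_add_distrib,
      prod_insert ha, card_insert_of_notMem ha,
      show (X - C (α a)) * (∏ i ∈ I, (X - C (α i))) * X ^ 2 =
        (∏ i ∈ I, (X - C (α i))) * X * X * (X - C (α a)) by ring,
      coeff_mul_X_sub_C, coeff_mul_X, coeff_prod_X_sub_C_mul_X, mul_assoc, ← pow_two, ih,
      ← sum_mul]
    ring

noncomputable def gapPoly : R[X] := (X + C (∑ i ∈ I, α i)) * ∏ i ∈ I, (X - C (α i))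

theorem gapPoly_monic : (gapPoly α I).Monic :=
  (monic_X_add_C _).mul (monic_prod_of_monic _ _ fun i _ => monic_X_sub_C (α i))

theorem natDegree_gapPoly [Nontrivial R] : (gapPoly α I).natDegree = #I + 1 := by
  rw [gapPoly, (monic_X_add_C _).natDegree_mul (monic_prod_of_monic _ _ fun i _ =>
    monic_X_sub_C (α i)), natDegree_X_add_C, natDegree_finsetProd_X_sub_C_eq_card, add_comm]

theorem coeff_gapPoly_card_add_one [Nontrivial R] : (gapPoly α I).coeff (#I + 1) = 1 := by
  rw [← natDegree_gapPoly α I]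
  exact (gapPoly_monic α I).coeff_natDegree

theorem coeff_gapPoly_card [Nontrivial R] : (gapPoly α I).coeff #I = 0 := by
  have hlead := (monic_prod_of_monic I _ fun i _ => monic_X_sub_C (α i)).coeff_natDegree
  rw [natDegree_finsetProd_X_sub_C_eq_card] at hlead
  rw [gapPoly, add_mul, mul_comm X, coeff_add, coeff_prod_X_sub_C_mul_X, coeff_C_mul, hlead,
    mul_one, neg_add_cancel]

theorem coeff_gapPoly_card_sub_one [LinearOrder ι] (hI : 1 ≤ #I) :
    (gapPoly α I).coeff (#I - 1) =
      ∑ i ∈ I, ∑ j ∈ I.filter (fun j => i < j), α i * α j - (∑ i ∈ I, α i) ^ 2 := by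
  rw [← coeff_mul_X, Nat.sub_add_cancel hI, gapPoly,
    show (X + C (∑ i ∈ I, α i)) * (∏ i ∈ I, (X - C (α i))) * X =
      (∏ i ∈ I, (X - C (α i))) * X ^ 2 + C (∑ i ∈ I, α i) * ((∏ i ∈ I, (X - C (α i))) * X) by ring,
    coeff_add, coeff_C_mul, coeff_prod_X_sub_C_mul_X, coeff_prod_X_sub_C_mul_X_sq]
  ring

theorem eval_gapPoly (x : R) :
    (gapPoly α I).eval x = (x + ∑ i ∈ I, α i) * ∏ i ∈ I, (x - α i) := by
  simp [gapPoly, eval_prod, eval_finsetSum]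

theorem eq_C_mul_gapPoly [IsDomain R] {f : R[X]} (hα : Set.InjOn α I)
    (hdeg : f.natDegree ≤ #I + 1) (hgap : f.coeff #I = 0) (hzero : ∀ i ∈ I, f.eval (α i) = 0) :
    f = C (f.coeff (#I + 1)) * gapPoly α I := by
  refine eq_of_degree_sub_lt_of_eval_index_eq I hα ((degree_lt_iff_coeff_zero _ _).2 ?_) ?_
  · intro m hm
    rw [coeff_sub, coeff_C_mul]
    rcases (show m = #I ∨ m = #I + 1 ∨ #I + 1 < m by omega) with rfl | rfl | hm
    · rw [hgap, coeff_gapPoly_card, mul_zero, sub_zero]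
    · rw [coeff_gapPoly_card_add_one, mul_one, sub_self]
    · rw [coeff_eq_zero_of_natDegree_lt (hdeg.trans_lt hm),
        coeff_eq_zero_of_natDegree_lt ((natDegree_gapPoly α I).trans_lt hm), mul_zero, sub_zero]
  · intro i hi
    rw [hzero i hi, eval_mul, eval_gapPoly, prod_eq_zero hi (sub_self _), mul_zero, mul_zero]

end GapPoly

theorem card_filter_eval_eq_zero_le_natDegree {ι R : Type*} [Fintype ι] [CommRing R] [IsDomain R]
    [DecidableEq R] {α : ι → R} (hα : Function.Injective α) {f : R[X]} (hf : f ≠ 0) :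
    #{j | f.eval (α j) = 0} ≤ f.natDegree := by
  rw [← card_image_of_injective _ hα]
  refine card_le_degree_of_subset_roots fun x hx => ?_
  obtain ⟨j, hj, rfl⟩ := mem_image.1 hx
  exact (mem_roots hf).2 (mem_filter.1 hj).2

section Code

variable {F : Type*} [Field F] {n : ℕ} {α v : Fin n → F} {k : ℕ} {δ : F}

variable (F k) in
noncomputable def gapPolys : Submodule F F[X] := degreeLE F k ⊓ LinearMap.ker (lcoeff F (k - 1))

theorem mem_gapPolys {f : F[X]} : f ∈ gapPolys F k ↔ f.natDegree ≤ k ∧ f.coeff (k - 1) = 0 := by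
  rw [gapPolys, Submodule.mem_inf, mem_degreeLE, ← natDegree_le_iff_degree_le]
  rfl

theorem gapPoly_mem_gapPolys {I : Finset (Fin n)} (hI : #I = k - 1) (hk : 1 ≤ k) :
    gapPoly α I ∈ gapPolys F k := by
  refine mem_gapPolys.2 ⟨by rw [natDegree_gapPoly]; omega, ?_⟩
  rw [← hI]
  exact coeff_gapPoly_card α I

theorem gapPolys_eq_span (hk : 1 ≤ k) :
    gapPolys F k = Submodule.span F (Set.range fun i : Fin k =>
      (X : F[X]) ^ (if (i : ℕ) = k - 1 then k else (i : ℕ))) := by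
  apply le_antisymm
  · intro f hf
    obtain ⟨hdeg, hgap⟩ := mem_gapPolys.1 hf
    rw [as_sum_range' f (k + 1) (by omega)]
    refine Submodule.sum_mem _ fun m hm => ?_
    by_cases hmk : m = k - 1
    · rw [hmk, hgap, map_zero]
      exact Submodule.zero_mem _
    · have hm : m < k + 1 := mem_range.1 hm
      rw [← C_mul_X_pow_eq_monomial, ← smul_eq_C_mul]
      refine Submodule.smul_mem _ _ (Submodule.subset_span
        ⟨⟨if m = k then k - 1 else m, by split_ifs <;> omega⟩, congrArg _ ?_⟩)
      dsimp only
      split_ifs <;> omega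
  · refine Submodule.span_le.2 ?_
    rintro _ ⟨i, rfl⟩
    refine mem_gapPolys.2 ⟨(natDegree_X_pow_le _).trans ?_, ?_⟩
    · split_ifs <;> omega
    · rw [coeff_X_pow, if_neg]
      split_ifs <;> omega

variable (α v k δ) in
noncomputable def encodePoly : F[X] →ₗ[F] Fin (n + 2) → F where
  toFun f j :=
    if hj : (j : ℕ) < n then v ⟨j, hj⟩ * f.eval (α ⟨j, hj⟩)
    else if (j : ℕ) = n then f.coeff k else f.coeff (k - 2) + δ * f.coeff k
  map_add' f g := by
    ext j
    simp only [eval_add, coeff_add, Pi.add_apply]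
    split_ifs <;> ring
  map_smul' c f := by
    ext j
    simp only [eval_smul, coeff_smul, smul_eq_mul, Pi.smul_apply, RingHom.id_apply]
    split_ifs <;> ring

theorem Gkmat_eq_encodePoly (hk : 2 ≤ k) (i : Fin k) :
    Gkmat F n k α v δ i = encodePoly α v k δ (X ^ (if (i : ℕ) = k - 1 then k else (i : ℕ))) := by
  ext j
  have := i.isLt
  simp only [Gkmat, encodePoly, LinearMap.coe_mk, AddHom.coe_mk, eval_pow, eval_X, coeff_X_pow]
  split_ifs <;> first | omega | simp

theorem span_range_Gkmat (hk : 2 ≤ k) :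
    Submodule.span F (Set.range (Gkmat F n k α v δ)) =
      (gapPolys F k).map (encodePoly α v k δ) := by
  rw [gapPolys_eq_span (by omega), Submodule.map_span, ← Set.range_comp]
  exact congrArg _ (congrArg _ (funext (Gkmat_eq_encodePoly hk)))

variable [DecidableEq F]

variable (α k δ) in
def zeroCount (f : F[X]) : ℕ :=
  #{j | f.eval (α j) = 0} + (if f.coeff k = 0 then 1 else 0) +
    (if f.coeff (k - 2) + δ * f.coeff k = 0 then 1 else 0)

theorem hammingNorm_encodePoly_add_zeroCount (hv : ∀ i, v i ≠ 0) (f : F[X]) :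
    hammingNorm (encodePoly α v k δ f) + zeroCount α k δ f = n + 2 := by
  have hsplit := card_filter_add_card_filter_not (s := univ)
    fun j => encodePoly α v k δ f j ≠ 0
  rw [card_univ, Fintype.card_fin] at hsplit
  refine Eq.trans ?_ hsplit
  rw [hammingNorm, zeroCount]
  congr 1
  rw [card_filter, card_filter, Fin.sum_univ_castSucc, Fin.sum_univ_castSucc]
  simp [encodePoly, hv]

theorem zeroCount_C_mul {c : F} (hc : c ≠ 0) (f : F[X]) :
    zeroCount α k δ (C c * f) = zeroCount α k δ f := by
  simp only [zeroCount, coeff_C_mul, eval_mul, eval_C, mul_eq_zero, hc, false_or,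
    show ∀ a b : F, c * a + δ * (c * b) = c * (a + δ * b) by intros; ring]

theorem zeroCount_le_of_coeff_eq_zero (hα : Function.Injective α) (hk : 3 ≤ k) {f : F[X]}
    (hf : f ∈ gapPolys F k) (hf0 : f ≠ 0) (hck : f.coeff k = 0) :
    zeroCount α k δ f ≤ k - 1 := by
  obtain ⟨hdeg, hgap⟩ := mem_gapPolys.1 hf
  have hroots := card_filter_eval_eq_zero_le_natDegree hα hf0
  by_cases hck2 : f.coeff (k - 2) = 0
  · have : f.natDegree ≤ k - 3 := natDegree_le_iff_coeff_eq_zero.2 fun m hm => by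
      rcases (show m = k - 2 ∨ m = k - 1 ∨ m = k ∨ k < m by omega) with rfl | rfl | rfl | hm
      exacts [hck2, hgap, hck, coeff_eq_zero_of_natDegree_lt (hdeg.trans_lt hm)]
    simp only [zeroCount, hck, hck2, mul_zero, add_zero, if_true]
    omega
  · have : f.natDegree ≤ k - 2 := natDegree_le_iff_coeff_eq_zero.2 fun m hm => by
      rcases (show m = k - 1 ∨ m = k ∨ k < m by omega) with rfl | rfl | hm
      exacts [hgap, hck, coeff_eq_zero_of_natDegree_lt (hdeg.trans_lt hm)]
    simp only [zeroCount, hck, hck2, mul_zero, add_zero, if_true, if_false]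
    omega

theorem exists_eq_C_mul_gapPoly_of_le_zeroCount (hα : Function.Injective α) (hk : 3 ≤ k)
    {f : F[X]} (hf : f ∈ gapPolys F k) (hf0 : f ≠ 0) (hzc : k ≤ zeroCount α k δ f) :
    ∃ c ≠ 0, ∃ I : Finset (Fin n), #I = k - 1 ∧ f = C c * gapPoly α I := by
  obtain ⟨hdeg, hgap⟩ := mem_gapPolys.1 hf
  have hck : f.coeff k ≠ 0 := fun hck =>
    absurd (zeroCount_le_of_coeff_eq_zero (δ := δ) hα hk hf hf0 hck) (by omega)
  have hroots : k - 1 ≤ #{j | f.eval (α j) = 0} := by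
    simp only [zeroCount, hck, if_false] at hzc
    split_ifs at hzc <;> omega
  obtain ⟨I, hIZ, hI⟩ := exists_subset_card_eq hroots
  refine ⟨f.coeff k, hck, I, hI, ?_⟩
  have h := eq_C_mul_gapPoly α I hα.injOn (by omega) (by rwa [hI])
    fun i hi => (mem_filter.1 (hIZ hi)).2
  rwa [hI, Nat.sub_add_cancel (by omega)] at h

theorem zeroCount_gapPoly_le_iff (hα : Function.Injective α) (hk : 3 ≤ k)
    {I : Finset (Fin n)} (hI : #I = k - 1) :
    zeroCount α k δ (gapPoly α I) ≤ k - 1 ↔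
      (∀ j ∉ I, α j + ∑ i ∈ I, α i ≠ 0) ∧
        (∑ i ∈ I, α i) ^ 2 - ∑ i ∈ I, ∑ j ∈ I.filter (fun j => i < j), α i * α j ≠ δ := by
  set T : Finset (Fin n) := {j | α j + ∑ i ∈ I, α i = 0} with hT
  have hzeros : ({j | (gapPoly α I).eval (α j) = 0} : Finset (Fin n)) = I ∪ T := by
    ext j
    simp [hT, eval_gapPoly, prod_eq_zero_iff, sub_eq_zero, hα.eq_iff, or_comm]
  have htop : (gapPoly α I).coeff k = 1 := by
    rw [← coeff_gapPoly_card_add_one α I, hI, Nat.sub_add_cancel (by omega)]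
  have hlow : (gapPoly α I).coeff (k - 2) =
      ∑ i ∈ I, ∑ j ∈ I.filter (fun j => i < j), α i * α j - (∑ i ∈ I, α i) ^ 2 := by
    rw [← coeff_gapPoly_card_sub_one α I (by omega), hI]
    rfl
  have hsubset : #(I ∪ T) ≤ #I ↔ ∀ j ∉ I, α j + ∑ i ∈ I, α i ≠ 0 := by
    constructor
    · intro h j hjI hj
      have hj : j ∈ I ∪ T := mem_union_right _ (by simpa [hT] using hj)
      rw [eq_of_superset_of_card_ge subset_union_left h] at hj
      exact hjI hj
    · intro h
      rw [union_eq_left.2 fun j hj => by_contra fun hjI => h j hjI (by simpa [hT] using hj)]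
  have hδ :
      ∑ i ∈ I, ∑ j ∈ I.filter (fun j => i < j), α i * α j - (∑ i ∈ I, α i) ^ 2 + δ * 1 = 0 ↔
        (∑ i ∈ I, α i) ^ 2 - ∑ i ∈ I, ∑ j ∈ I.filter (fun j => i < j), α i * α j = δ := by
    constructor <;> intro h <;> linear_combination -h
  have hunion : #I ≤ #(I ∪ T) := card_le_card subset_union_left
  rw [zeroCount, hzeros, htop, hlow, ← hI, ← hsubset, ne_eq, ← hδ]
  split_ifs <;> simp_all

theorem forall_zeroCount_le_iff (hα : Function.Injective α) (hk : 3 ≤ k) :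
    (∀ f ∈ gapPolys F k, f ≠ 0 → zeroCount α k δ f ≤ k - 1) ↔
      ∀ I : Finset (Fin n), #I = k - 1 → zeroCount α k δ (gapPoly α I) ≤ k - 1 := by
  refine ⟨fun h I hI => h _ (gapPoly_mem_gapPolys hI (by omega)) (gapPoly_monic α I).ne_zero,
    fun h f hf hf0 => ?_⟩
  by_contra! hzc
  obtain ⟨c, hc, I, hI, rfl⟩ :=
    exists_eq_C_mul_gapPoly_of_le_zeroCount (δ := δ) hα hk hf hf0 (by omega)
  exact (h I hI).not_gt (by rwa [zeroCount_C_mul hc] at hzc)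

theorem encodePoly_ne_zero (hα : Function.Injective α) (hv : ∀ i, v i ≠ 0) (hk : 3 ≤ k)
    (hkn : k ≤ n) {f : F[X]} (hf : f ∈ gapPolys F k) (hf0 : f ≠ 0) : encodePoly α v k δ f ≠ 0 := by
  intro h0
  have hck : f.coeff k = 0 := by
    simpa [encodePoly] using congrFun h0 ⟨n, by omega⟩
  have hweight := hammingNorm_encodePoly_add_zeroCount (α := α) (k := k) (δ := δ) hv f
  have := zeroCount_le_of_coeff_eq_zero (δ := δ) hα hk hf hf0 hck
  rw [h0, hammingNorm_zero] at hweight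
  omega

theorem exists_mem_gapPolys_le_zeroCount (hk : 3 ≤ k) (hkn : k ≤ n) :
    ∃ f ∈ gapPolys F k, f ≠ 0 ∧ k - 1 ≤ zeroCount α k δ f := by
  obtain ⟨S, -, hS⟩ := exists_subset_card_eq (s := (univ : Finset (Fin n))) (n := k - 2)
    (by simp; omega)
  set f : F[X] := ∏ i ∈ S, (X - C (α i))
  have hdeg : f.natDegree = k - 2 := by rw [natDegree_finsetProd_X_sub_C_eq_card, hS]
  refine ⟨f, mem_gapPolys.2 ⟨by omega, coeff_eq_zero_of_natDegree_lt (by omega)⟩,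
    (monic_prod_of_monic _ _ fun i _ => monic_X_sub_C (α i)).ne_zero, ?_⟩
  have hroots : #S ≤ #{j | f.eval (α j) = 0} := card_le_card fun j hj =>
    mem_filter.2 ⟨mem_univ _, by simp [f, eval_prod, prod_eq_zero hj]⟩
  simp only [zeroCount, coeff_eq_zero_of_natDegree_lt (show f.natDegree < k by omega), if_true]
  omega

theorem minDist_map_encodePoly_iff (hα : Function.Injective α) (hv : ∀ i, v i ≠ 0)
    (hk : 3 ≤ k) (hkn : k ≤ n) :
    minDist ((gapPolys F k).map (encodePoly α v k δ)) (n - k + 3) ↔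
      ∀ f ∈ gapPolys F k, f ≠ 0 → zeroCount α k δ f ≤ k - 1 := by
  have hweight := hammingNorm_encodePoly_add_zeroCount (α := α) (k := k) (δ := δ) hv
  simp only [minDist, Submodule.mem_map, forall_exists_index, and_imp]
  constructor
  · rintro ⟨-, hmin⟩ f hf hf0
    have := hmin _ f hf rfl (encodePoly_ne_zero hα hv hk hkn hf hf0)
    have := hweight f
    omega
  · intro h
    refine ⟨?_, fun c f hf hfc hc0 => ?_⟩
    · obtain ⟨f, hf, hf0, hzc⟩ := exists_mem_gapPolys_le_zeroCount (α := α) (δ := δ) hk hkn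
      refine ⟨_, ⟨f, hf, rfl⟩, encodePoly_ne_zero hα hv hk hkn hf hf0, ?_⟩
      have := hweight f
      have := h f hf hf0
      omega
    · subst hfc
      have := h f hf fun hf0 => hc0 (by rw [hf0, map_zero])
      have := hweight f
      omega

end Code

theorem forall_card_eq_sum_ne_zero_iff {ι M : Type*} [DecidableEq ι] [AddCommMonoid M]
    (α : ι → M) {k : ℕ} (hk : 1 ≤ k) :
    (∀ K : Finset ι, #K = k → ∑ i ∈ K, α i ≠ 0) ↔
      ∀ I : Finset ι, #I = k - 1 → ∀ j ∉ I, α j + ∑ i ∈ I, α i ≠ 0 := by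
  constructor
  · intro h I hI j hj
    rw [← sum_insert hj]
    exact h _ (by rw [card_insert_of_notMem hj]; omega)
  · intro h K hK
    obtain ⟨j, hj⟩ := card_pos.1 (show 0 < #K by omega)
    rw [← add_sum_erase K α hj]
    exact h _ (by rw [card_erase_of_mem hj]; omega) j (notMem_erase j K)

theorem stmt_4_general (F : Type*) [Field F] [DecidableEq F] (n k : ℕ)
    (hk : 3 ≤ k) (hkn : k ≤ n)
    (α v : Fin n → F) (hα : Function.Injective α) (hv : ∀ i, v i ≠ 0) (δ : F) :
    minDist (Submodule.span F (Set.range (Gkmat F n k α v δ))) (n - k + 3) ↔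
      ((∀ K : Finset (Fin n), K.card = k → ∑ i ∈ K, α i ≠ 0) ∧
        (∀ I : Finset (Fin n), I.card = k - 1 →
          (∑ i ∈ I, α i) ^ 2 - (∑ i ∈ I, ∑ j ∈ I.filter (fun j => i < j), α i * α j) ≠ δ)) := by
  rw [span_range_Gkmat (by omega), minDist_map_encodePoly_iff hα hv hk hkn,
    forall_zeroCount_le_iff hα hk, forall_card_eq_sum_ne_zero_iff α (by omega)]
  refine (forall₂_congr fun I (hI : #I = k - 1) =>
    zeroCount_gapPoly_le_iff (δ := δ) hα hk hI).trans ?_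
  simp only [imp_and, forall_and]

/-- `C_k(A,v)` is MDS (its minimum distance equals `(n+2) - k + 1 = n - k + 3`) iff
(1) no `k` of the `α_i` sum to `0`, and (2) for every `(k-1)`-subset `I`,
`(∑_{i∈I} α_i)² - ∑_{i<j∈I} α_i α_j ≠ δ`. -/
theorem stmt_4 (F : Type*) [Field F] [Fintype F] [DecidableEq F] (n k : ℕ)
    (hk : 3 ≤ k) (hkn : k ≤ n) (hnq : n ≤ Fintype.card F)
    (α v : Fin n → F) (hα : Function.Injective α) (hv : ∀ i, v i ≠ 0) (δ : F) :
    minDist (Submodule.span F (Set.range (Gkmat F n k α v δ))) (n - k + 3) ↔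
      ((∀ K : Finset (Fin n), K.card = k → ∑ i ∈ K, α i ≠ 0) ∧
        (∀ I : Finset (Fin n), I.card = k - 1 →
          (∑ i ∈ I, α i) ^ 2 - (∑ i ∈ I, ∑ j ∈ I.filter (fun j => i < j), α i * α j) ≠ δ)) :=
  stmt_4_general F n k hk hkn α v hα hv δ
end

section
/- The code C_k(A,v) is NMDS (i.e., both C_k(A,v) and its Euclidean dual are AMDS) if and only if the following three conditions hold: (a) for every subset I ⊆ {1,…,n} of size k+1 there exists a subset J ⊆ I of size k with Σ_{i∈J} α_i ≠ 0; (b) for every subset I' ⊆ {1,…,n} of size k there exists a subset J' ⊆ I' of size k−1 with δ − (Σ_{i∈J'} α_i)^2 + Σ_{i<j, i,j∈J'} α_i α_j ≠ 0; and (c) either there exists a subset L ⊆ {1,…,n} of size k with Σ_{i∈L} α_i = 0, or there exists a subset M ⊆ {1,…,n} of size k−1 with δ = (Σ_{i∈M} α_i)^2 − Σ_{i<j, i,j∈M} α_i α_j. -/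
/-!
A codeword of `C_k(A,v)` is `((v_j f(α_j))_j, f_k, f_{k-2} + δ f_k)` for a polynomial `f` of
degree `≤ k` with no `X^(k-1)` term. A nonzero such `f` vanishes at no more than `k` of the `α_j`,
and at a set `Z` of exactly `k` of them only if `f = f_k ∏_{j∈Z} (X - α_j)`; then `e₁(Z) = 0`
and the last coordinate is `f_k (δ + e₂(Z))`. So the distance is `≥ n-k+2` iff no `k`-set has
`e₁ = 0` and `e₂ = -δ` (equivalently (b)), and under (c) the weight `n-k+2` is attained by the
word of `∏_{j∈L} (X - α_j)` or of `∏_{j∈M} (X - α_j) · (X + e₁(M))`.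

A dual word `y` yields `c_j = v_j y_j` whose moments `∑ c_j α_j^e` vanish for `e < k-2`, and for
`e < k-1` when `y_{n+1} = 0`. By Lagrange interpolation a nonzero vector with vanishing moments
below `m` has more than `m` nonzero entries, and with exactly `m+1` it is proportional to the
nodal weights `w_j = ∏_{i≠j} (α_j - α_i)⁻¹`, for which `∑ w_j α_j^(m+1) = e₁` and
`∑ w_j α_j^(m+2) = e₁² - e₂`. Hence the dual distance is always `≥ k`, with equality iff (c).
Condition (a) always holds: if two `k`-subsets of a `(k+1)`-set both had zero sum, the two
missing `α_i` would coincide.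
-/

open Polynomial Finset Lagrange

section Nodal

variable {F : Type*} [CommRing F] {ι : Type*}

lemma coeff_nodal_card_sub_one (v : ι → F) {s : Finset ι} (hs : s.Nonempty) :
    (nodal s v).coeff (#s - 1) = -∑ i ∈ s, v i :=
  prod_X_sub_C_coeff_card_pred s v hs.card_pos

variable [LinearOrder ι]

def esymm2 (s : Finset ι) (v : ι → F) : F :=
  ∑ i ∈ s, ∑ j ∈ s.filter (fun j => i < j), v i * v j

lemma esymm2_insert {a : ι} {s : Finset ι} (v : ι → F) (ha : a ∉ s) :
    esymm2 (insert a s) v = esymm2 s v + v a * ∑ i ∈ s, v i := by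
  have hrow : ∀ i ∈ s, ∑ j ∈ (insert a s).filter (fun j => i < j), v i * v j =
      (if i < a then v i * v a else 0) + ∑ j ∈ s.filter (fun j => i < j), v i * v j := by
    intro i _
    rw [filter_insert]
    split_ifs
    · rw [sum_insert fun h => ha (mem_filter.mp h).1]
    · rw [zero_add]
  have hsplit : ∑ i ∈ s, v i = ∑ j ∈ s.filter (fun j => a < j), v j +
      ∑ i ∈ s.filter (fun i => i < a), v i := by
    rw [← sum_filter_add_sum_filter_not s (fun j => a < j)]
    congr 1
    refine sum_congr (filter_congr fun i hi => ?_) fun _ _ => rfl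
    rw [not_lt, le_iff_lt_or_eq, or_iff_left (ne_of_mem_of_not_mem hi ha)]
  rw [esymm2, sum_insert ha, filter_insert, if_neg (lt_irrefl a), sum_congr rfl hrow,
    sum_add_distrib, ← sum_filter, hsplit, mul_add, mul_sum, mul_sum, esymm2]
  simp_rw [mul_comm (v a)]
  ring

lemma sq_sum_sub_esymm2_insert {a : ι} {s : Finset ι} (v : ι → F) (ha : a ∉ s) :
    (∑ i ∈ insert a s, v i) ^ 2 - esymm2 (insert a s) v =
      (∑ i ∈ s, v i) ^ 2 - esymm2 s v + v a * ∑ i ∈ insert a s, v i := by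
  rw [esymm2_insert v ha, sum_insert ha]
  ring

lemma coeff_nodal_card_sub_two (v : ι → F) (s : Finset ι) (hs : 2 ≤ #s) :
    (nodal s v).coeff (#s - 2) = esymm2 s v := by
  induction s using Finset.induction_on with
  | empty => simp at hs
  | insert a s has ih =>
    have hs1 : 0 < #s := by rw [card_insert_of_notMem has] at hs; omega
    have htop := coeff_nodal_card_sub_one v (card_pos.mp hs1)
    rw [nodal_insert_eq_nodal has, mul_comm, card_insert_of_notMem has,
      esymm2_insert v has]
    rcases Nat.lt_or_ge #s 2 with h1 | h2
    · have hs0 : #s - 1 = 0 := by omega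
      have hesymm : esymm2 s v = 0 := by
        obtain ⟨b, rfl⟩ := card_eq_one.mp (show #s = 1 by omega)
        simp [esymm2, filter_singleton]
      have h0 : (nodal s v).coeff 0 = -∑ i ∈ s, v i := hs0 ▸ htop
      rw [show #s + 1 - 2 = 0 by omega, mul_coeff_zero, h0, hesymm]
      simp [mul_comm]
    · rw [show #s + 1 - 2 = (#s - 2) + 1 by omega, coeff_mul_X_sub_C, ih h2,
        show #s - 2 + 1 = #s - 1 by omega, htop]
      ring

end Nodal

section TraceFreeNodal

variable {F : Type*} [CommRing F] {ι : Type*} {s : Finset ι} {v : ι → F}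

noncomputable def traceFreeNodal (s : Finset ι) (v : ι → F) : F[X] :=
  nodal s v * (X + C (∑ i ∈ s, v i))

lemma traceFreeNodal_monic : (traceFreeNodal s v).Monic :=
  nodal_monic.mul (monic_X_add_C _)

lemma natDegree_traceFreeNodal [Nontrivial F] : (traceFreeNodal s v).natDegree = #s + 1 := by
  rw [traceFreeNodal, nodal_monic.natDegree_mul (monic_X_add_C _), natDegree_nodal,
    natDegree_X_add_C]

lemma coeff_traceFreeNodal (m : ℕ) : (traceFreeNodal s v).coeff (m + 1) =
    (nodal s v).coeff m + (nodal s v).coeff (m + 1) * ∑ i ∈ s, v i := by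
  rw [traceFreeNodal, mul_add, coeff_add, coeff_mul_X, coeff_mul_C]

lemma coeff_traceFreeNodal_card [Nontrivial F] (hs : s.Nonempty) :
    (traceFreeNodal s v).coeff #s = 0 := by
  have h := coeff_traceFreeNodal (s := s) (v := v) (#s - 1)
  rw [Nat.sub_add_cancel hs.card_pos, coeff_nodal_card_sub_one v hs] at h
  rw [h, ← natDegree_nodal (v := v), nodal_monic.coeff_natDegree]
  ring

lemma coeff_traceFreeNodal_card_sub_one [LinearOrder ι] (hs : 2 ≤ #s) :
    (traceFreeNodal s v).coeff (#s - 1) = esymm2 s v - (∑ i ∈ s, v i) ^ 2 := by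
  have h := coeff_traceFreeNodal (s := s) (v := v) (#s - 2)
  rw [show #s - 2 + 1 = #s - 1 by omega, coeff_nodal_card_sub_two v s hs,
    coeff_nodal_card_sub_one v (card_pos.mp (by omega))] at h
  rw [h]
  ring

end TraceFreeNodal

section NodalWeight

variable {F : Type*} [Field F] {ι : Type*} [DecidableEq ι] {s : Finset ι} {v : ι → F}

lemma sum_nodalWeight_mul_eval_s10 (hvs : Set.InjOn v s) {f : F[X]} (hf : f.degree < #s) :
    ∑ i ∈ s, nodalWeight s v i * f.eval (v i) = f.coeff (#s - 1) := by
  rw [coeff_eq_sum hvs hf]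
  refine sum_congr rfl fun i _ => ?_
  rw [nodalWeight, prod_inv_distrib, div_eq_mul_inv, mul_comm]

lemma sum_nodalWeight_mul_pow_of_lt (hvs : Set.InjOn v s) {e : ℕ} (he : e < #s) :
    ∑ i ∈ s, nodalWeight s v i * v i ^ e = if e = #s - 1 then 1 else 0 := by
  have h := sum_nodalWeight_mul_eval_s10 hvs (f := X ^ e) (by rw [degree_X_pow]; exact_mod_cast he)
  simp only [eval_pow, eval_X, coeff_X_pow] at h
  rw [h]
  exact if_congr eq_comm rfl rfl

lemma sum_nodalWeight_mul_pow_card (hvs : Set.InjOn v s) (hs : s.Nonempty) :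
    ∑ i ∈ s, nodalWeight s v i * v i ^ #s = ∑ i ∈ s, v i := by
  have hdeg : (X ^ #s - nodal s v).degree < (#s : WithBot ℕ) := by
    have h := degree_sub_lt_left (p := (X ^ #s : F[X])) (q := nodal s v)
      (by rw [degree_X_pow, degree_nodal]) (monic_X_pow _).ne_zero
      (by rw [(monic_X_pow _).leadingCoeff, nodal_monic.leadingCoeff])
    rwa [degree_X_pow] at h
  have h := sum_nodalWeight_mul_eval_s10 hvs hdeg
  rw [coeff_sub, coeff_X_pow, if_neg (by have := hs.card_pos; omega),
    coeff_nodal_card_sub_one v hs, zero_sub, neg_neg] at h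
  rw [← h]
  refine sum_congr rfl fun i hi => ?_
  rw [eval_sub, eval_pow, eval_X, eval_nodal_at_node hi, sub_zero]

lemma sum_nodalWeight_mul_pow_card_add_one [LinearOrder ι] (hvs : Set.InjOn v s)
    (hs : 2 ≤ #s) :
    ∑ i ∈ s, nodalWeight s v i * v i ^ (#s + 1) = (∑ i ∈ s, v i) ^ 2 - esymm2 s v := by
  have hdeg : (X ^ (#s + 1) - traceFreeNodal s v).degree < (#s : WithBot ℕ) := by
    refine (degree_lt_iff_coeff_zero _ _).mpr fun m hm => ?_
    rw [coeff_sub, coeff_X_pow]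
    rcases (show m = #s ∨ m = #s + 1 ∨ #s + 1 < m by omega) with rfl | rfl | hlt
    · rw [if_neg (by omega), coeff_traceFreeNodal_card (card_pos.mp (by omega)), sub_zero]
    · rw [if_pos rfl, ← natDegree_traceFreeNodal (v := v), traceFreeNodal_monic.coeff_natDegree,
        sub_self]
    · rw [if_neg (by omega), coeff_eq_zero_of_natDegree_lt (by rwa [natDegree_traceFreeNodal]),
        sub_zero]
  have h := sum_nodalWeight_mul_eval_s10 hvs hdeg
  rw [coeff_sub, coeff_X_pow, if_neg (by omega), coeff_traceFreeNodal_card_sub_one hs,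
    zero_sub, neg_sub] at h
  rw [← h]
  refine sum_congr rfl fun i hi => ?_
  rw [eval_sub, eval_pow, eval_X, traceFreeNodal, eval_mul, eval_nodal_at_node hi, zero_mul,
    sub_zero]

end NodalWeight

lemma sum_mul_eval_eq_coeff_mul {R ι : Type*} [CommRing R] {s : Finset ι} {c v : ι → R} {m : ℕ}
    (h : ∀ e < m, ∑ i ∈ s, c i * v i ^ e = 0) {f : R[X]} (hf : f.natDegree ≤ m) :
    ∑ i ∈ s, c i * f.eval (v i) = f.coeff m * ∑ i ∈ s, c i * v i ^ m := by
  calc ∑ i ∈ s, c i * f.eval (v i)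
      = ∑ e ∈ range (m + 1), f.coeff e * ∑ i ∈ s, c i * v i ^ e := by
        simp_rw [eval_eq_sum_range' (Nat.lt_succ_of_le hf), mul_sum]
        rw [sum_comm]
        exact sum_congr rfl fun _ _ => sum_congr rfl fun _ _ => by ring
    _ = f.coeff m * ∑ i ∈ s, c i * v i ^ m := by
        rw [sum_range_succ, sum_eq_zero fun e he => by rw [h e (mem_range.mp he), mul_zero],
          zero_add]

section Moments

variable {F : Type*} [Field F] {ι : Type*} [DecidableEq ι] {s : Finset ι} {c v : ι → F} {m : ℕ}

lemma sum_mul_eval_basis (hvs : Set.InjOn v s) {j : ι} (hj : j ∈ s) :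
    ∑ i ∈ s, c i * (Lagrange.basis s v j).eval (v i) = c j := by
  rw [sum_eq_single_of_mem j hj fun i hi hij => by rw [eval_basis_of_ne hij.symm hi, mul_zero],
    eval_basis_self hvs hj, mul_one]

lemma eq_zero_of_sum_mul_pow_eq_zero (hvs : Set.InjOn v s)
    (h : ∀ e < m, ∑ i ∈ s, c i * v i ^ e = 0) (hs : #s ≤ m) {j : ι} (hj : j ∈ s) :
    c j = 0 := by
  have hdeg := natDegree_basis hvs hj
  have hlt : (Lagrange.basis s v j).natDegree < m := by have := card_pos.mpr ⟨j, hj⟩; omega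
  rw [← sum_mul_eval_basis (c := c) hvs hj, sum_mul_eval_eq_coeff_mul h hlt.le,
    coeff_eq_zero_of_natDegree_lt hlt, zero_mul]

lemma eq_nodalWeight_mul_of_sum_mul_pow_eq_zero (hvs : Set.InjOn v s)
    (h : ∀ e < m, ∑ i ∈ s, c i * v i ^ e = 0) (hs : #s = m + 1) {j : ι} (hj : j ∈ s) :
    c j = nodalWeight s v j * ∑ i ∈ s, c i * v i ^ m := by
  have hdeg : (Lagrange.basis s v j).natDegree = m := by
    rw [natDegree_basis hvs hj, hs, Nat.add_sub_cancel]
  rw [← sum_mul_eval_basis (c := c) hvs hj, sum_mul_eval_eq_coeff_mul h hdeg.le, ← hdeg,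
    ← leadingCoeff, leadingCoeff_basis hvs hj, nodalWeight, prod_inv_distrib]

end Moments

section Support

variable {F : Type*} [Field F] [DecidableEq F] {ι : Type*} [Fintype ι] {c w : ι → F} {m : ℕ}

lemma sum_filter_ne_zero_mul (c g : ι → F) :
    ∑ i ∈ {i | c i ≠ 0}, c i * g i = ∑ i, c i * g i :=
  sum_filter_of_ne fun _ _ h => left_ne_zero_of_mul h

variable [DecidableEq ι]

lemma lt_hammingNorm_of_sum_mul_pow_eq_zero (hw : Function.Injective w)
    (h : ∀ e < m, ∑ i, c i * w i ^ e = 0) (hc : c ≠ 0) : m < hammingNorm c := by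
  by_contra! hle
  refine hc (funext fun j => by_contra fun hj => hj ?_)
  refine eq_zero_of_sum_mul_pow_eq_zero (s := {i | c i ≠ 0}) hw.injOn
    (fun e he => by rw [sum_filter_ne_zero_mul]; exact h e he) hle ?_
  exact mem_filter.mpr ⟨mem_univ j, hj⟩

lemma sum_mul_eq_of_sum_mul_pow_eq_zero (hw : Function.Injective w)
    (h : ∀ e < m, ∑ i, c i * w i ^ e = 0) (hcard : hammingNorm c = m + 1) (g : ι → F) :
    ∑ i, c i * g i = (∑ i, c i * w i ^ m) *
      ∑ i ∈ {i | c i ≠ 0}, nodalWeight {i | c i ≠ 0} w i * g i := by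
  rw [← sum_filter_ne_zero_mul, mul_sum]
  refine sum_congr rfl fun i hi => ?_
  rw [eq_nodalWeight_mul_of_sum_mul_pow_eq_zero (c := c) hw.injOn
    (fun e he => by rw [sum_filter_ne_zero_mul]; exact h e he) hcard hi, sum_filter_ne_zero_mul]
  ring

lemma sum_mul_pow_hammingNorm (hw : Function.Injective w)
    (h : ∀ e < hammingNorm c - 1, ∑ i, c i * w i ^ e = 0) (hc : c ≠ 0) :
    ∑ i, c i * w i ^ hammingNorm c =
      (∑ i, c i * w i ^ (hammingNorm c - 1)) * ∑ i ∈ {i | c i ≠ 0}, w i := by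
  have hpos := hammingNorm_pos_iff.mpr hc
  rw [sum_mul_eq_of_sum_mul_pow_eq_zero hw h (by omega)]
  congr 1
  exact sum_nodalWeight_mul_pow_card hw.injOn (card_pos.mp hpos)

lemma sum_mul_pow_hammingNorm_add_one [LinearOrder ι] (hw : Function.Injective w)
    (h : ∀ e < hammingNorm c - 1, ∑ i, c i * w i ^ e = 0) (hc : 2 ≤ hammingNorm c) :
    ∑ i, c i * w i ^ (hammingNorm c + 1) = (∑ i, c i * w i ^ (hammingNorm c - 1)) *
      ((∑ i ∈ {i | c i ≠ 0}, w i) ^ 2 - esymm2 {i | c i ≠ 0} w) := by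
  rw [sum_mul_eq_of_sum_mul_pow_eq_zero hw h (by omega)]
  congr 1
  exact sum_nodalWeight_mul_pow_card_add_one hw.injOn hc

end Support

lemma natDegree_le_sub_two_of_coeff_eq_zero {R : Type*} [Semiring R] {f : R[X]} {k : ℕ}
    (hdeg : f.natDegree ≤ k) (hk1 : f.coeff (k - 1) = 0) (hk0 : f.coeff k = 0) :
    f.natDegree ≤ k - 2 :=
  natDegree_le_iff_coeff_eq_zero.mpr fun m hm => by
    rcases (show m = k - 1 ∨ m = k ∨ k < m by omega) with rfl | rfl | hlt
    · exact hk1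
    · exact hk0
    · exact coeff_eq_zero_of_natDegree_lt (hdeg.trans_lt (by exact_mod_cast hlt))

section Roots

variable {R : Type*} [CommRing R] [IsDomain R] {ι : Type*} {v : ι → R} {f : R[X]}

lemma eq_C_mul_nodal {s : Finset ι} (hvs : Set.InjOn v s) (hdeg : f.natDegree ≤ #s)
    (hs : ∀ i ∈ s, f.eval (v i) = 0) : f = C (f.coeff #s) * nodal s v := by
  refine eq_of_degree_sub_lt_of_eval_index_eq s hvs ?_ fun i hi => ?_
  · refine (degree_lt_iff_coeff_zero _ _).mpr fun m hm => ?_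
    rw [coeff_sub, coeff_C_mul]
    rcases hm.eq_or_lt with rfl | hlt
    · rw [← natDegree_nodal (v := v), nodal_monic.coeff_natDegree, natDegree_nodal, mul_one,
        sub_self]
    · rw [coeff_eq_zero_of_natDegree_lt (p := f) (hdeg.trans_lt hlt),
        coeff_eq_zero_of_natDegree_lt (p := nodal s v) (by rwa [natDegree_nodal]), mul_zero,
        sub_zero]
  · rw [eval_mul, eval_nodal_at_node hi, mul_zero, hs i hi]

variable [Fintype ι] [DecidableEq R]

lemma card_filter_eval_eq_zero_le (hv : Function.Injective v) (hf : f ≠ 0) :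
    #{i | f.eval (v i) = 0} ≤ f.natDegree := by
  rw [← card_image_of_injective _ hv]
  refine card_le_degree_of_subset_roots fun x hx => ?_
  obtain ⟨i, hi, rfl⟩ := mem_image.mp (mem_val.mp hx)
  exact (mem_roots hf).mpr (mem_filter.mp hi).2

lemma filter_eval_nodal_eq_zero (hv : Function.Injective v) (s : Finset ι) :
    ({i | (nodal s v).eval (v i) = 0} : Finset ι) = s := by
  ext i
  simp [eval_nodal, prod_eq_zero_iff, sub_eq_zero, hv.eq_iff]

end Roots

section Hamming

variable {β : Type*} [Zero β] [DecidableEq β]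

lemma hammingNorm_append {m n : ℕ} (u : Fin m → β) (w : Fin n → β) :
    hammingNorm (Fin.append u w) = hammingNorm u + hammingNorm w := by
  simp only [hammingNorm, card_filter]
  rw [Fin.sum_univ_add]
  simp only [Fin.append_left, Fin.append_right]

lemma hammingNorm_pair (a b : β) :
    hammingNorm ![a, b] = (if a = 0 then 0 else 1) + (if b = 0 then 0 else 1) := by
  simp only [hammingNorm, card_filter, Fin.sum_univ_two]
  split_ifs <;> simp_all

end Hamming

lemma exists_eq_append_pair {β : Type*} {n : ℕ} (y : Fin (n + 2) → β) :
    ∃ u a b, y = Fin.append u ![a, b] :=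
  ⟨_, _, _, by
    conv_lhs => rw [← Fin.append_castAdd_natAdd (f := y)]
    congr 1
    funext t
    fin_cases t <;> rfl⟩

lemma hammingNorm_mul_left {F : Type*} [Field F] [DecidableEq F] {ι : Type*} [Fintype ι]
    {v : ι → F} (hv : ∀ i, v i ≠ 0) (u : ι → F) :
    hammingNorm (fun i => v i * u i) = hammingNorm u :=
  hammingNorm_comp (fun i x => v i * x) (fun i => mul_right_injective₀ (hv i)) fun _ => mul_zero _

section Code

variable {F : Type*} [Field F] {n k : ℕ} {α v : Fin n → F} {δ : F}

def rowExp (k : ℕ) (i : Fin k) : ℕ := if (i : ℕ) = k - 1 then k else i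

variable (k α v δ) in
noncomputable def gkWord : F[X] →ₗ[F] Fin (n + 2) → F where
  toFun f :=
    Fin.append (fun j => v j * f.eval (α j)) ![f.coeff k, f.coeff (k - 2) + δ * f.coeff k]
  map_add' f g := by
    ext j
    refine Fin.addCases (fun j => ?_) (fun t => ?_) j
    · simp only [Fin.append_left, Pi.add_apply, eval_add]
      ring
    · fin_cases t
      · simp [Fin.append_right]
      · simp [Fin.append_right]
        ring
  map_smul' a f := by
    ext j
    refine Fin.addCases (fun j => ?_) (fun t => ?_) j
    · simp only [Fin.append_left, Pi.smul_apply, eval_smul, smul_eq_mul, RingHom.id_apply]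
      ring
    · fin_cases t
      · simp [Fin.append_right]
      · simp [Fin.append_right]
        ring

lemma gkWord_apply (f : F[X]) : gkWord k α v δ f =
    Fin.append (fun j => v j * f.eval (α j)) ![f.coeff k, f.coeff (k - 2) + δ * f.coeff k] :=
  rfl

lemma Gkmat_eq_gkWord (hk : 2 ≤ k) (i : Fin k) :
    Gkmat F n k α v δ i = gkWord k α v δ (X ^ rowExp k i) := by
  ext j
  refine Fin.addCases (fun j => ?_) (fun t => ?_) j
  · simp only [Gkmat, gkWord_apply, rowExp, Fin.val_castAdd, j.isLt, Fin.append_left]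
    split_ifs <;> simp
  · have hi := i.isLt
    fin_cases t <;> simp only [Gkmat, gkWord_apply, rowExp] <;> simp <;> split_ifs <;>
      simp only [coeff_X_pow] <;> split_ifs <;> first | omega | simp

variable (k α v δ) in
def gkCode : Submodule F (Fin (n + 2) → F) := Submodule.span F (Set.range (Gkmat F n k α v δ))

lemma forall_rowExp_iff (hk : 1 ≤ k) (P : ℕ → Prop) :
    (∀ i : Fin k, P (rowExp k i)) ↔ (∀ e < k - 1, P e) ∧ P k := by
  refine ⟨fun h => ⟨fun e he => ?_, ?_⟩, fun ⟨hlow, htop⟩ i => ?_⟩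
  · simpa [rowExp, show e ≠ k - 1 by omega] using h ⟨e, by omega⟩
  · simpa [rowExp] using h ⟨k - 1, by omega⟩
  · unfold rowExp
    split_ifs with hi
    · exact htop
    · exact hlow i (by omega)

lemma mem_span_X_pow_rowExp_iff (hk : 1 ≤ k) {f : F[X]} :
    f ∈ Submodule.span F (Set.range fun i : Fin k => (X : F[X]) ^ rowExp k i) ↔
      f.natDegree ≤ k ∧ f.coeff (k - 1) = 0 := by
  constructor
  · intro hf
    induction hf using Submodule.span_induction with
    | mem g hg =>
      obtain ⟨i, rfl⟩ := hg
      have hi := i.isLt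
      simp only [natDegree_X_pow, coeff_X_pow, rowExp]
      split_ifs <;> first | omega | exact ⟨by omega, rfl⟩
    | zero => simp
    | add g h _ _ hg hh =>
      exact ⟨(natDegree_add_le _ _).trans (max_le hg.1 hh.1),
        by rw [coeff_add, hg.2, hh.2, add_zero]⟩
    | smul a g _ hg =>
      exact ⟨(natDegree_smul_le _ _).trans hg.1, by rw [coeff_smul, hg.2, smul_zero]⟩
  · rintro ⟨hdeg, hcoeff⟩
    rw [as_sum_range' f (k + 1) (Nat.lt_succ_of_le hdeg)]
    refine Submodule.sum_mem _ fun e he => ?_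
    rw [← C_mul_X_pow_eq_monomial, ← smul_eq_C_mul]
    by_cases he1 : e = k - 1
    · rw [he1, hcoeff, zero_smul]
      exact Submodule.zero_mem _
    have hek := mem_range.mp he
    obtain ⟨i, hi⟩ : ∃ i : Fin k, rowExp k i = e := by
      by_cases hke : e = k
      · exact ⟨⟨k - 1, by omega⟩, by simp [rowExp, hke]⟩
      · exact ⟨⟨e, by omega⟩, by simp [rowExp, he1]⟩
    exact Submodule.smul_mem _ _ (Submodule.subset_span ⟨i, by simp only [hi]⟩)

lemma mem_code_iff (hk : 2 ≤ k) {c : Fin (n + 2) → F} :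
    c ∈ gkCode k α v δ ↔
      ∃ f : F[X], f.natDegree ≤ k ∧ f.coeff (k - 1) = 0 ∧ gkWord k α v δ f = c := by
  have hG : Gkmat F n k α v δ = gkWord k α v δ ∘ fun i => X ^ rowExp k i :=
    funext (Gkmat_eq_gkWord hk)
  rw [gkCode, hG, Set.range_comp, Submodule.span_image, Submodule.mem_map]
  simp_rw [mem_span_X_pow_rowExp_iff (by omega : 1 ≤ k), and_assoc]

lemma mem_dualCode_span_range_iff {ι : Type*} [Fintype ι] {N : ℕ} (g : ι → Fin N → F)
    (y : Fin N → F) :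
    y ∈ dualCode (Submodule.span F (Set.range g)) ↔ ∀ i, ∑ j, g i j * y j = 0 := by
  refine ⟨fun hy i => hy _ (Submodule.subset_span ⟨i, rfl⟩), fun h x hx => ?_⟩
  induction hx using Submodule.span_induction with
  | mem x hx => obtain ⟨i, rfl⟩ := hx; exact h i
  | zero => simp
  | add x x' _ _ hx hx' => simp [add_mul, sum_add_distrib, hx, hx']
  | smul a x _ hx => simp [mul_assoc, ← mul_sum, hx]

lemma sum_gkWord_mul_append (f : F[X]) (u : Fin n → F) (a b : F) :
    ∑ j, gkWord k α v δ f j * Fin.append u ![a, b] j =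
      ∑ j, v j * u j * f.eval (α j) + f.coeff k * a +
        (f.coeff (k - 2) + δ * f.coeff k) * b := by
  rw [Fin.sum_univ_add]
  simp only [gkWord_apply, Fin.append_left, Fin.append_right, Fin.sum_univ_two]
  simp only [Matrix.cons_val_zero, Matrix.cons_val_one]
  rw [add_assoc]
  congr 1
  exact sum_congr rfl fun _ _ => by ring

lemma mem_dualCode_iff (hk : 2 ≤ k) {u : Fin n → F} {a b : F} :
    Fin.append u ![a, b] ∈ dualCode (gkCode k α v δ) ↔
      (∀ e < k - 1, ∑ j, v j * u j * α j ^ e + (if e = k - 2 then b else 0) = 0) ∧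
        ∑ j, v j * u j * α j ^ k + a + δ * b = 0 := by
  rw [gkCode, mem_dualCode_span_range_iff]
  simp_rw [Gkmat_eq_gkWord hk, sum_gkWord_mul_append, eval_pow, eval_X]
  rw [forall_rowExp_iff (by omega) fun e => ∑ j, v j * u j * α j ^ e + (X ^ e).coeff k * a +
    ((X ^ e).coeff (k - 2) + δ * (X ^ e).coeff k) * b = 0]
  refine and_congr (forall₂_congr fun e he => ?_) ?_
  · simp only [coeff_X_pow, if_neg (show k ≠ e by omega)]
    by_cases h : e = k - 2
    · simp [h]
    · simp [h, Ne.symm h]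
  · simp only [coeff_X_pow_self, coeff_X_pow, if_neg (show k - 2 ≠ k by omega), one_mul,
      zero_add, mul_one]

end Code

section Primal

variable {F : Type*} [Field F] [DecidableEq F] {n k : ℕ} {α v : Fin n → F} {δ : F} {f : F[X]}

lemma hammingNorm_gkWord (hv : ∀ i, v i ≠ 0) (f : F[X]) :
    hammingNorm (gkWord k α v δ f) = n - #{j | f.eval (α j) = 0} +
      ((if f.coeff k = 0 then 0 else 1) +
        (if f.coeff (k - 2) + δ * f.coeff k = 0 then 0 else 1)) := by
  rw [gkWord_apply, hammingNorm_append, hammingNorm_pair, hammingNorm_mul_left hv]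
  congr 1
  have h := card_filter_add_card_filter_not (s := univ) (p := fun j => f.eval (α j) = 0)
  rw [card_univ, Fintype.card_fin] at h
  simp only [hammingNorm, ne_eq]
  omega

lemma le_hammingNorm_gkWord (hk : 2 ≤ k) (hkn : k ≤ n) (hα : Function.Injective α)
    (hv : ∀ i, v i ≠ 0)
    (hB : ∀ J : Finset (Fin n), #J = k → ∑ i ∈ J, α i = 0 → δ + esymm2 J α ≠ 0)
    (hf : f ≠ 0) (hdeg : f.natDegree ≤ k) (hk1 : f.coeff (k - 1) = 0) :
    n - k + 2 ≤ hammingNorm (gkWord k α v δ f) := by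
  rw [hammingNorm_gkWord hv]
  set Z : Finset (Fin n) := {j | f.eval (α j) = 0}
  have hZf : #Z ≤ f.natDegree := card_filter_eval_eq_zero_le hα hf
  by_cases hk0 : f.coeff k = 0
  · have := natDegree_le_sub_two_of_coeff_eq_zero hdeg hk1 hk0
    omega
  rw [if_neg hk0]
  rcases (show #Z < k ∨ #Z = k by omega) with hlt | hZk
  · omega
  have hfac : f = C (f.coeff k) * nodal Z α :=
    hZk ▸ eq_C_mul_nodal hα.injOn (hZk ▸ hdeg) fun j hj => (mem_filter.mp hj).2
  have hS : ∑ i ∈ Z, α i = 0 := by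
    have h := hk1
    rw [hfac, coeff_C_mul, show k - 1 = #Z - 1 by omega,
      coeff_nodal_card_sub_one α (card_pos.mp (by omega))] at h
    exact neg_eq_zero.mp ((mul_eq_zero.mp h).resolve_left hk0)
  have hk2 : f.coeff (k - 2) = f.coeff k * esymm2 Z α := by
    rw [← coeff_nodal_card_sub_two α Z (by omega), hZk, ← coeff_C_mul, ← hfac]
  have hlast : f.coeff (k - 2) + δ * f.coeff k ≠ 0 := by
    rw [hk2, show f.coeff k * esymm2 Z α + δ * f.coeff k = f.coeff k * (δ + esymm2 Z α) by ring]
    exact mul_ne_zero hk0 (hB Z hZk hS)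
  rw [if_neg hlast]
  omega

lemma exists_hammingNorm_gkWord_eq_of_sum_eq_zero (hk : 2 ≤ k) (hα : Function.Injective α)
    (hv : ∀ i, v i ≠ 0) {J : Finset (Fin n)} (hJ : #J = k) (hS : ∑ i ∈ J, α i = 0) :
    ∃ f : F[X], f.natDegree ≤ k ∧ f.coeff (k - 1) = 0 ∧
      hammingNorm (gkWord k α v δ f) = n - k + 1 + if δ + esymm2 J α = 0 then 0 else 1 := by
  have hk0 : (nodal J α).coeff k = 1 := by
    rw [← hJ, ← natDegree_nodal (v := α), nodal_monic.coeff_natDegree]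
  have hk1 : (nodal J α).coeff (k - 1) = 0 := by
    rw [← hJ, coeff_nodal_card_sub_one α (card_pos.mp (by omega)), hS, neg_zero]
  have hk2 : (nodal J α).coeff (k - 2) = esymm2 J α := by
    rw [← hJ, coeff_nodal_card_sub_two α J (by omega)]
  refine ⟨nodal J α, by rw [natDegree_nodal, hJ], hk1, ?_⟩
  rw [hammingNorm_gkWord hv, filter_eval_nodal_eq_zero hα, hk0, hk2, hJ, mul_one,
    add_comm (esymm2 J α), if_neg one_ne_zero]
  omega

lemma exists_hammingNorm_gkWord_eq_of_eq_sq_sub_esymm2 (hk : 3 ≤ k) (hkn : k ≤ n)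
    (hα : Function.Injective α) (hv : ∀ i, v i ≠ 0)
    (hB : ∀ J : Finset (Fin n), #J = k → ∑ i ∈ J, α i = 0 → δ + esymm2 J α ≠ 0)
    {M : Finset (Fin n)} (hM : #M = k - 1) (hδ : δ = (∑ i ∈ M, α i) ^ 2 - esymm2 M α) :
    ∃ f : F[X], f.natDegree ≤ k ∧ f.coeff (k - 1) = 0 ∧
      hammingNorm (gkWord k α v δ f) = n - k + 2 := by
  set f := traceFreeNodal M α
  have hdeg : f.natDegree = k := by rw [natDegree_traceFreeNodal, hM]; omega
  have hk0 : f.coeff k = 1 := by rw [← hdeg]; exact traceFreeNodal_monic.coeff_natDegree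
  have hk1 : f.coeff (k - 1) = 0 := by
    rw [← hM]; exact coeff_traceFreeNodal_card (card_pos.mp (by omega))
  have hk2 : f.coeff (k - 2) + δ * f.coeff k = 0 := by
    rw [show k - 2 = #M - 1 by omega, coeff_traceFreeNodal_card_sub_one (by omega), hk0, hδ]
    ring
  have hlow := le_hammingNorm_gkWord (f := f) (by omega) hkn hα hv hB
    traceFreeNodal_monic.ne_zero hdeg.le hk1
  have hM_sub : M ⊆ ({j | f.eval (α j) = 0} : Finset (Fin n)) := fun j hj => mem_filter.mpr
    ⟨mem_univ j, by simp [f, traceFreeNodal, eval_nodal_at_node hj]⟩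
  have := card_le_card hM_sub
  refine ⟨f, hdeg.le, hk1, ?_⟩
  rw [hammingNorm_gkWord hv, hk2, hk0, if_neg one_ne_zero, if_pos rfl] at hlow ⊢
  omega

lemma minDist_gkCode (hk : 3 ≤ k) (hkn : k ≤ n) (hα : Function.Injective α)
    (hv : ∀ i, v i ≠ 0)
    (hB : ∀ J : Finset (Fin n), #J = k → ∑ i ∈ J, α i = 0 → δ + esymm2 J α ≠ 0)
    (hC : (∃ L : Finset (Fin n), #L = k ∧ ∑ i ∈ L, α i = 0) ∨
      ∃ M : Finset (Fin n), #M = k - 1 ∧ δ = (∑ i ∈ M, α i) ^ 2 - esymm2 M α) :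
    minDist (gkCode k α v δ) (n - k + 2) := by
  refine ⟨?_, fun c hc hc0 => ?_⟩
  · obtain ⟨f, hdeg, hk1, hw⟩ : ∃ f : F[X], f.natDegree ≤ k ∧ f.coeff (k - 1) = 0 ∧
        hammingNorm (gkWord k α v δ f) = n - k + 2 := by
      rcases hC with ⟨L, hL, hS⟩ | ⟨M, hM, hδ⟩
      · obtain ⟨f, hdeg, hk1, hw⟩ :=
          exists_hammingNorm_gkWord_eq_of_sum_eq_zero (δ := δ) (by omega) hα hv hL hS
        exact ⟨f, hdeg, hk1, by rw [hw, if_neg (hB L hL hS)]⟩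
      · exact exists_hammingNorm_gkWord_eq_of_eq_sq_sub_esymm2 hk hkn hα hv hB hM hδ
    refine ⟨_, (mem_code_iff (by omega)).mpr ⟨f, hdeg, hk1, rfl⟩, fun h0 => ?_, hw⟩
    rw [h0, hammingNorm_zero] at hw
    omega
  · obtain ⟨f, hdeg, hk1, rfl⟩ := (mem_code_iff (by omega)).mp hc
    refine le_hammingNorm_gkWord (by omega) hkn hα hv hB ?_ hdeg hk1
    rintro rfl
    exact hc0 (map_zero _)

lemma add_esymm2_ne_zero_of_minDist (hk : 2 ≤ k) (hα : Function.Injective α)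
    (hv : ∀ i, v i ≠ 0) (h : minDist (gkCode k α v δ) (n - k + 2)) :
    ∀ J : Finset (Fin n), #J = k → ∑ i ∈ J, α i = 0 → δ + esymm2 J α ≠ 0 := by
  intro J hJ hS hδ
  obtain ⟨f, hdeg, hk1, hw⟩ :=
    exists_hammingNorm_gkWord_eq_of_sum_eq_zero (δ := δ) hk hα hv hJ hS
  rw [if_pos hδ, add_zero] at hw
  have hne : gkWord k α v δ f ≠ 0 := fun h0 => by rw [h0, hammingNorm_zero] at hw; omega
  have := h.2 _ ((mem_code_iff hk).mpr ⟨f, hdeg, hk1, rfl⟩) hne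
  omega

end Primal

section Dual

variable {F : Type*} [Field F] [DecidableEq F] {n k : ℕ} {α v : Fin n → F} {δ : F}
  {c : Fin n → F} {a b : F}

lemma le_hammingNorm_and_exists_sum_eq_zero (hk : 1 ≤ k) (hα : Function.Injective α)
    (hmom : ∀ e < k - 1, ∑ j, c j * α j ^ e = 0) (htop : ∑ j, c j * α j ^ k + a = 0)
    (hc : c ≠ 0) :
    k ≤ hammingNorm c ∧ (hammingNorm c + (if a = 0 then 0 else 1) = k →
      ∃ L : Finset (Fin n), #L = k ∧ ∑ i ∈ L, α i = 0) := by
  have hcard := lt_hammingNorm_of_sum_mul_pow_eq_zero hα hmom hc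
  refine ⟨by omega, fun hw => ?_⟩
  have hJ : hammingNorm c = k := by split_ifs at hw <;> omega
  have ha : a = 0 := by by_contra ha; rw [if_neg ha] at hw; omega
  have hlead : ∑ j, c j * α j ^ (k - 1) ≠ 0 := fun h0 => by
    have := lt_hammingNorm_of_sum_mul_pow_eq_zero (m := k) hα
      (fun e he => (show e < k - 1 ∨ e = k - 1 by omega).elim (hmom e) fun he => he ▸ h0) hc
    omega
  have hsum := sum_mul_pow_hammingNorm hα (fun e he => hmom e (by omega)) hc
  rw [hJ, show ∑ j, c j * α j ^ k = 0 by simpa [ha] using htop] at hsum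
  exact ⟨({j | c j ≠ 0} : Finset (Fin n)), hJ, (mul_eq_zero.mp hsum.symm).resolve_left hlead⟩

lemma le_hammingNorm_and_exists_eq_sq_sub_esymm2 (hk : 3 ≤ k) (hα : Function.Injective α)
    (hmom : ∀ e < k - 2, ∑ j, c j * α j ^ e = 0) (hsub : ∑ j, c j * α j ^ (k - 2) + b = 0)
    (htop : ∑ j, c j * α j ^ k + a + δ * b = 0) (hb : b ≠ 0) :
    k ≤ hammingNorm c + 1 ∧ (hammingNorm c + (if a = 0 then 0 else 1) + 1 = k →
      ∃ M : Finset (Fin n), #M = k - 1 ∧ δ = (∑ i ∈ M, α i) ^ 2 - esymm2 M α) := by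
  have hlead : ∑ j, c j * α j ^ (k - 2) = -b := eq_neg_of_add_eq_zero_left hsub
  have hc : c ≠ 0 := fun h0 => hb (by simpa [h0] using hlead)
  have hcard := lt_hammingNorm_of_sum_mul_pow_eq_zero hα hmom hc
  refine ⟨by omega, fun hw => ⟨({j | c j ≠ 0} : Finset (Fin n)), ?_⟩⟩
  have hJ : hammingNorm c = k - 1 := by split_ifs at hw <;> omega
  have ha : a = 0 := by by_contra ha; rw [if_neg ha] at hw; omega
  have hsum := sum_mul_pow_hammingNorm_add_one hα (fun e he => hmom e (by omega)) (by omega)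
  rw [hJ, show k - 1 + 1 = k by omega, show k - 1 - 1 = k - 2 by omega, hlead] at hsum
  refine ⟨hJ, mul_left_cancel₀ (neg_ne_zero.mpr hb) ?_⟩
  rw [← hsum]
  linear_combination ha - htop

lemma le_hammingNorm_of_mem_dualCode (hk : 3 ≤ k) (hα : Function.Injective α)
    (hv : ∀ i, v i ≠ 0) {y : Fin (n + 2) → F} (hy : y ∈ dualCode (gkCode k α v δ))
    (hy0 : y ≠ 0) :
    k ≤ hammingNorm y ∧ (hammingNorm y = k →
      (∃ L : Finset (Fin n), #L = k ∧ ∑ i ∈ L, α i = 0) ∨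
        ∃ M : Finset (Fin n), #M = k - 1 ∧ δ = (∑ i ∈ M, α i) ^ 2 - esymm2 M α) := by
  obtain ⟨u, a, b, rfl⟩ := exists_eq_append_pair y
  obtain ⟨hlow, htop⟩ := (mem_dualCode_iff (by omega)).mp hy
  have hpos := hammingNorm_pos_iff.mpr hy0
  rw [hammingNorm_append, hammingNorm_pair, ← hammingNorm_mul_left hv] at hpos ⊢
  by_cases hb : b = 0
  · have hc : (fun j => v j * u j) ≠ 0 := fun h0 => by
      have ha : a = 0 := by simpa [funext_iff.mp h0, hb] using htop
      rw [h0, hammingNorm_zero, if_pos ha, if_pos hb] at hpos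
      exact lt_irrefl 0 hpos
    obtain ⟨hle, hL⟩ := le_hammingNorm_and_exists_sum_eq_zero (k := k) (by omega) hα
      (fun e he => by simpa [hb] using hlow e he) (by simpa [hb] using htop) hc
    rw [if_pos hb, add_zero]
    exact ⟨by omega, fun hw => Or.inl (hL hw)⟩
  · obtain ⟨hle, hM⟩ := le_hammingNorm_and_exists_eq_sq_sub_esymm2 hk hα
      (fun e he => by simpa [show e ≠ k - 2 by omega] using hlow e (by omega))
      (by simpa using hlow (k - 2) (by omega)) htop hb
    rw [if_neg hb, ← add_assoc]
    exact ⟨by omega, fun hw => Or.inr (hM hw)⟩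

end Dual

section DualWitness

variable {F : Type*} [Field F] {n k : ℕ} {α v : Fin n → F} {δ : F}
  {J : Finset (Fin n)} {b : F}

lemma append_nodalWeight_mem_dualCode (hk : 2 ≤ k) (hv : ∀ i, v i ≠ 0)
    (hlow : ∀ e < k - 1,
      ∑ j ∈ J, nodalWeight J α j * α j ^ e + (if e = k - 2 then b else 0) = 0)
    (htop : ∑ j ∈ J, nodalWeight J α j * α j ^ k + δ * b = 0) :
    Fin.append (fun j => if j ∈ J then nodalWeight J α j / v j else 0) ![0, b] ∈
      dualCode (gkCode k α v δ) := by
  have hsum : ∀ e, ∑ j, v j * (if j ∈ J then nodalWeight J α j / v j else 0) * α j ^ e =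
      ∑ j ∈ J, nodalWeight J α j * α j ^ e := fun e => by
    rw [← sum_subset (subset_univ J) fun j _ hj => by simp [hj]]
    exact sum_congr rfl fun j hj => by rw [if_pos hj]; field_simp [hv j]
  rw [mem_dualCode_iff hk]
  simp only [hsum, add_zero]
  exact ⟨hlow, htop⟩

variable [DecidableEq F]

lemma hammingNorm_append_nodalWeight (hα : Function.Injective α) (hv : ∀ i, v i ≠ 0) :
    hammingNorm (Fin.append (fun j => if j ∈ J then nodalWeight J α j / v j else 0) ![0, b]) =
      #J + if b = 0 then 0 else 1 := by
  rw [hammingNorm_append, hammingNorm_pair, if_pos rfl, zero_add]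
  congr 1
  simp only [hammingNorm]
  congr 1
  ext j
  simpa [hv j] using fun hj => nodalWeight_ne_zero hα.injOn hj

lemma exists_mem_dualCode_hammingNorm_eq (hk : 3 ≤ k) (hα : Function.Injective α)
    (hv : ∀ i, v i ≠ 0)
    (hC : (∃ L : Finset (Fin n), #L = k ∧ ∑ i ∈ L, α i = 0) ∨
      ∃ M : Finset (Fin n), #M = k - 1 ∧ δ = (∑ i ∈ M, α i) ^ 2 - esymm2 M α) :
    ∃ y ∈ dualCode (gkCode k α v δ), y ≠ 0 ∧ hammingNorm y = k := by
  suffices ∃ (J : Finset (Fin n)) (b : F),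
      (∀ e < k - 1,
        ∑ j ∈ J, nodalWeight J α j * α j ^ e + (if e = k - 2 then b else 0) = 0) ∧
      ∑ j ∈ J, nodalWeight J α j * α j ^ k + δ * b = 0 ∧
      #J + (if b = 0 then 0 else 1) = k by
    obtain ⟨J, b, hlow, htop, hw⟩ := this
    refine ⟨_, append_nodalWeight_mem_dualCode (by omega) hv hlow htop, fun h0 => ?_,
      by rw [hammingNorm_append_nodalWeight hα hv, hw]⟩
    have := congrArg hammingNorm h0
    rw [hammingNorm_append_nodalWeight hα hv, hammingNorm_zero] at this
    omega
  rcases hC with ⟨L, hL, hS⟩ | ⟨M, hM, hδ⟩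
  · refine ⟨L, 0, fun e he => ?_, ?_, by simp [hL]⟩
    · rw [sum_nodalWeight_mul_pow_of_lt hα.injOn (by omega), if_neg (by omega), ite_self,
        add_zero]
    · rw [← hL, sum_nodalWeight_mul_pow_card hα.injOn (card_pos.mp (by omega)), hS, mul_zero,
        add_zero]
  · refine ⟨M, -1, fun e he => ?_, ?_, by simp [hM]; omega⟩
    · rw [sum_nodalWeight_mul_pow_of_lt hα.injOn (by omega), hM]
      split_ifs <;> first | omega | ring
    · rw [show k = #M + 1 by omega, sum_nodalWeight_mul_pow_card_add_one hα.injOn (by omega),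
        ← hδ]
      ring

lemma minDist_dualCode_gkCode_iff (hk : 3 ≤ k) (hα : Function.Injective α)
    (hv : ∀ i, v i ≠ 0) :
    minDist (dualCode (gkCode k α v δ)) k ↔
      (∃ L : Finset (Fin n), #L = k ∧ ∑ i ∈ L, α i = 0) ∨
        ∃ M : Finset (Fin n), #M = k - 1 ∧ δ = (∑ i ∈ M, α i) ^ 2 - esymm2 M α :=
  ⟨fun ⟨⟨_, hy, hy0, hw⟩, _⟩ => (le_hammingNorm_of_mem_dualCode hk hα hv hy hy0).2 hw,
    fun hC => ⟨exists_mem_dualCode_hammingNorm_eq hk hα hv hC,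
      fun _ hy hy0 => (le_hammingNorm_of_mem_dualCode hk hα hv hy hy0).1⟩⟩

end DualWitness

lemma exists_subset_card_eq_sum_ne_zero {ι G : Type*} [DecidableEq ι] [AddCommGroup G]
    {α : ι → G} (hα : Function.Injective α) {k : ℕ} (hk : 1 ≤ k) {I : Finset ι}
    (hI : #I = k + 1) : ∃ J ⊆ I, #J = k ∧ ∑ i ∈ J, α i ≠ 0 := by
  by_contra! h
  obtain ⟨a, ha, b, hb, hab⟩ := one_lt_card.mp (show 1 < #I by omega)
  have hsum : ∀ i ∈ I, ∑ j ∈ I, α j = α i := fun i hi => by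
    rw [← add_sum_erase I α hi, h _ (erase_subset i I) (by rw [card_erase_of_mem hi]; omega),
      add_zero]
  exact hab (hα ((hsum a ha).symm.trans (hsum b hb)))

lemma forall_exists_sub_sq_add_esymm2_ne_zero_iff {F ι : Type*} [Field F] [LinearOrder ι]
    {α : ι → F} {δ : F} {k : ℕ} (hk : 2 ≤ k) (hα : Function.Injective α) :
    (∀ I : Finset ι, #I = k →
      ∃ J ⊆ I, #J = k - 1 ∧ δ - (∑ i ∈ J, α i) ^ 2 + esymm2 J α ≠ 0) ↔
    ∀ J : Finset ι, #J = k → ∑ i ∈ J, α i = 0 → δ + esymm2 J α ≠ 0 := by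
  constructor
  · intro h J hJ hS hδ
    obtain ⟨J', hJ'J, hJ', hne⟩ := h J hJ
    obtain ⟨i, hiJ, hiJ'⟩ := exists_mem_notMem_of_card_lt_card (s := J') (t := J) (by omega)
    have hins : insert i J' = J := eq_of_subset_of_card_le (insert_subset hiJ hJ'J)
      (by rw [card_insert_of_notMem hiJ']; omega)
    have hrel := sq_sum_sub_esymm2_insert α hiJ'
    rw [hins, hS] at hrel
    exact hne (by linear_combination hδ + hrel)
  · intro h I hI
    by_contra! hall
    have key : ∀ i ∈ I,
        δ = (∑ j ∈ I, α j) ^ 2 - esymm2 I α - α i * ∑ j ∈ I, α j := by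
      intro i hi
      have hrel := sq_sum_sub_esymm2_insert α (notMem_erase i I)
      rw [insert_erase hi] at hrel
      linear_combination hall _ (erase_subset i I) (by rw [card_erase_of_mem hi, hI]) - hrel
    obtain ⟨a, ha, b, hb, hab⟩ := one_lt_card.mp (show 1 < #I by omega)
    have hS : ∑ j ∈ I, α j = 0 := by
      have h0 : (α a - α b) * ∑ j ∈ I, α j = 0 := by linear_combination key a ha - key b hb
      exact (mul_eq_zero.mp h0).resolve_left (sub_ne_zero.mpr (hα.ne hab))
    exact h I hI hS (by linear_combination key a ha + (∑ j ∈ I, α j - α a) * hS)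

theorem stmt_10_general (F : Type*) [Field F] [DecidableEq F] (n k : ℕ)
    (hk : 3 ≤ k) (hkn : k ≤ n)
    (α v : Fin n → F) (hα : Function.Injective α) (hv : ∀ i, v i ≠ 0) (δ : F) :
    (minDist (Submodule.span F (Set.range (Gkmat F n k α v δ))) (n - k + 2) ∧
        minDist (dualCode (Submodule.span F (Set.range (Gkmat F n k α v δ)))) k) ↔
      ((∀ I : Finset (Fin n), I.card = k + 1 →
          ∃ J ⊆ I, J.card = k ∧ ∑ i ∈ J, α i ≠ 0) ∧
        (∀ I' : Finset (Fin n), I'.card = k →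
          ∃ J' ⊆ I', J'.card = k - 1 ∧
            δ - (∑ i ∈ J', α i) ^ 2 +
              (∑ i ∈ J', ∑ j ∈ J'.filter (fun j => i < j), α i * α j) ≠ 0) ∧
        ((∃ L : Finset (Fin n), L.card = k ∧ ∑ i ∈ L, α i = 0) ∨
          (∃ M : Finset (Fin n), M.card = k - 1 ∧
            δ = (∑ i ∈ M, α i) ^ 2 -
              ∑ i ∈ M, ∑ j ∈ M.filter (fun j => i < j), α i * α j))) := by
  change minDist (gkCode k α v δ) _ ∧ minDist (dualCode (gkCode k α v δ)) k ↔ _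
  rw [minDist_dualCode_gkCode_iff hk hα hv]
  have hcondB := forall_exists_sub_sq_add_esymm2_ne_zero_iff (k := k) (δ := δ) (by omega) hα
  constructor
  · rintro ⟨hprim, hC⟩
    exact ⟨fun I hI => exists_subset_card_eq_sum_ne_zero (k := k) hα (by omega) hI,
      hcondB.mpr (add_esymm2_ne_zero_of_minDist (by omega) hα hv hprim), hC⟩
  · rintro ⟨-, hb, hC⟩
    exact ⟨minDist_gkCode hk hkn hα hv (hcondB.mp hb) hC, hC⟩

/-- `C_k(A,v)` is NMDS (both it, of length `n+2` and dimension `k`, and its dual,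
of dimension `n+2-k`, are AMDS: their minimum distances are `n-k+2` and `k`
respectively) iff conditions (a), (b) and (c) hold. -/
theorem stmt_10 (F : Type*) [Field F] [Fintype F] [DecidableEq F] (n k : ℕ)
    (hk : 3 ≤ k) (hkn : k ≤ n) (hnq : n ≤ Fintype.card F)
    (α v : Fin n → F) (hα : Function.Injective α) (hv : ∀ i, v i ≠ 0) (δ : F) :
    (minDist (Submodule.span F (Set.range (Gkmat F n k α v δ))) (n - k + 2) ∧
        minDist (dualCode (Submodule.span F (Set.range (Gkmat F n k α v δ)))) k) ↔
      ((∀ I : Finset (Fin n), I.card = k + 1 →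
          ∃ J ⊆ I, J.card = k ∧ ∑ i ∈ J, α i ≠ 0) ∧
        (∀ I' : Finset (Fin n), I'.card = k →
          ∃ J' ⊆ I', J'.card = k - 1 ∧
            δ - (∑ i ∈ J', α i) ^ 2 +
              (∑ i ∈ J', ∑ j ∈ J'.filter (fun j => i < j), α i * α j) ≠ 0) ∧
        ((∃ L : Finset (Fin n), L.card = k ∧ ∑ i ∈ L, α i = 0) ∨
          (∃ M : Finset (Fin n), M.card = k - 1 ∧
            δ = (∑ i ∈ M, α i) ^ 2 -
              ∑ i ∈ M, ∑ j ∈ M.filter (fun j => i < j), α i * α j))) :=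
  stmt_10_general F n k hk hkn α v hα hv δ
end

section
/- Any k−1 columns of the matrix G_k are linearly independent over F_q; consequently, the minimum Hamming distance of the Euclidean dual code C_k(A,v)^⊥ is at least k. -/
/-! A column relation of weight at most `k - 1` is a kernel vector `c` of `G_k`. Writing
`b_j = v_j c_j` for its first `n` coordinates, rows `0, …, k - 3` of `G_k c = 0` say that the
power sums `∑ b_j α_j^i` vanish for `i < k - 2`, and row `k - 2` adds `i = k - 2` when the last
coordinate of `c` is zero. Either way `b` has no more nonzero entries than there are vanishing
power sums, so the Vandermonde determinant forces `b = 0`; rows `k - 2` and `k - 1` then kill the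
last two coordinates. The dual code is the kernel of `G_k`, so its distance bound is the same
statement. -/

open Matrix

theorem hammingNorm_eq_hammingNorm_init_add {M : Type*} [Zero M] [DecidableEq M] {m : ℕ}
    (c : Fin (m + 1) → M) :
    hammingNorm c = hammingNorm (Fin.init c) + if c (Fin.last m) ≠ 0 then 1 else 0 := by
  rw [hammingNorm, hammingNorm, Finset.card_filter, Finset.card_filter, Fin.sum_univ_castSucc]
  rfl

theorem eq_zero_of_hammingNorm_le_of_sum_mul_pow_eq_zero {R ι : Type*} [CommRing R] [IsDomain R]
    [DecidableEq R] [Fintype ι] {x b : ι → R} (hx : Function.Injective x) {m : ℕ}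
    (hb : hammingNorm b ≤ m) (h : ∀ i < m, ∑ j, b j * x j ^ i = 0) : b = 0 := by
  set T : Finset ι := {j | b j ≠ 0}
  let e := T.equivFin
  have hsum (i : ℕ) :
      ∑ j : Fin T.card, b (e.symm j : ι) * x (e.symm j : ι) ^ i = ∑ j, b j * x j ^ i := by
    rw [Equiv.sum_comp e.symm (fun j : T => b j * x j ^ i),
      Finset.sum_coe_sort T (fun j => b j * x j ^ i)]
    exact Finset.sum_subset T.subset_univ fun j _ hj => by simp_all [T]
  have hbT : (fun j => b (e.symm j)) = 0 :=
    eq_zero_of_forall_pow_sum_mul_pow_eq_zero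
      (hx.comp (Subtype.val_injective.comp e.symm.injective))
      fun i => (hsum i).trans (h i (i.2.trans_le hb))
  ext j
  by_contra hj
  have hjT : j ∈ T := by simpa [T] using hj
  exact hj (by simpa using congrFun hbT (e ⟨j, hjT⟩))

theorem linearIndepOn_cols_of_mulVec_eq_zero {R ι κ : Type*} [CommRing R] [DecidableEq R]
    [Fintype κ] {M : Matrix ι κ R} {d : ℕ}
    (hM : ∀ c, hammingNorm c ≤ d → M *ᵥ c = 0 → c = 0) {S : Finset κ}
    (hS : S.card ≤ d) :
    LinearIndepOn R (fun j i => M i j) S := by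
  classical
  rw [linearIndepOn_finset_iff]
  intro f hf j hj
  set c : κ → R := fun j => if j ∈ S then f j else 0
  have hc : hammingNorm c ≤ d :=
    (Finset.card_le_card fun j hj => by by_contra h; simp [c, h] at hj).trans hS
  have hMc : M *ᵥ c = 0 := by
    ext i
    simpa [mulVec, dotProduct, c, Finset.sum_apply, mul_comm] using congrFun hf i
  simpa [c, hj] using congrFun (hM c hc hMc) j

section Gkmat

variable {F : Type*} [Field F] {n k : ℕ} {α v : Fin n → F} {δ : F}

theorem Gkmat_mulVec_apply_of_lt (c : Fin (n + 2) → F) {i : Fin k} (hi : (i : ℕ) < k - 2) :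
    (Matrix.of (Gkmat F n k α v δ) *ᵥ c) i =
      ∑ j, v j * c j.castSucc.castSucc * α j ^ (i : ℕ) := by
  simp [mulVec, dotProduct, Fin.sum_univ_castSucc, Gkmat, hi.ne,
    show (i : ℕ) ≠ k - 1 by omega, mul_right_comm]

theorem Gkmat_mulVec_apply_sub_two (hk : 2 ≤ k) (c : Fin (n + 2) → F) :
    (Matrix.of (Gkmat F n k α v δ) *ᵥ c) ⟨k - 2, by omega⟩ =
      ∑ j, v j * c j.castSucc.castSucc * α j ^ (k - 2) + c (Fin.last (n + 1)) := by
  simp [mulVec, dotProduct, Fin.sum_univ_castSucc, Gkmat, show k - 2 ≠ k - 1 by omega,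
    mul_right_comm]

theorem Gkmat_mulVec_apply_sub_one (hk : 2 ≤ k) (c : Fin (n + 2) → F) :
    (Matrix.of (Gkmat F n k α v δ) *ᵥ c) ⟨k - 1, by omega⟩ =
      ∑ j, v j * c j.castSucc.castSucc * α j ^ k + c (Fin.last n).castSucc +
        δ * c (Fin.last (n + 1)) := by
  simp [mulVec, dotProduct, Fin.sum_univ_castSucc, Gkmat, show k - 1 ≠ k - 2 by omega,
    mul_right_comm]

theorem eq_zero_of_Gkmat_mulVec_eq_zero [DecidableEq F] (hk : 2 ≤ k) (hα : Function.Injective α)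
    (hv : ∀ i, v i ≠ 0) {c : Fin (n + 2) → F} (hc : hammingNorm c ≤ k - 1)
    (h : Matrix.of (Gkmat F n k α v δ) *ᵥ c = 0) : c = 0 := by
  set b : Fin n → F := fun j => v j * c j.castSucc.castSucc
  set t := c (Fin.last (n + 1))
  have hweight : hammingNorm b + (if t ≠ 0 then 1 else 0) ≤ k - 1 := by
    have : hammingNorm b = hammingNorm (Fin.init (Fin.init c)) :=
      hammingNorm_comp (fun j x => v j * x) (fun j => mul_right_injective₀ (hv j))
        fun _ => mul_zero _
    have := hammingNorm_eq_hammingNorm_init_add c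
    have := hammingNorm_eq_hammingNorm_init_add (Fin.init c)
    split_ifs at * <;> omega
  have hmoment (i : ℕ) (hi : i < k - 2) : ∑ j, b j * α j ^ i = 0 := by
    simpa [Gkmat_mulVec_apply_of_lt c (i := ⟨i, by omega⟩) hi]
      using congrFun h ⟨i, by omega⟩
  have hrow₂ : ∑ j, b j * α j ^ (k - 2) + t = 0 := by
    simpa [Gkmat_mulVec_apply_sub_two hk c] using congrFun h ⟨k - 2, by omega⟩
  have hrow₁ : ∑ j, b j * α j ^ k + c (Fin.last n).castSucc + δ * t = 0 := by
    simpa [Gkmat_mulVec_apply_sub_one hk c] using congrFun h ⟨k - 1, by omega⟩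
  have hb : b = 0 := by
    by_cases ht : t = 0
    · refine eq_zero_of_hammingNorm_le_of_sum_mul_pow_eq_zero hα (m := k - 1)
        (by simpa [ht] using hweight) fun i hi => ?_
      rcases Nat.lt_or_ge i (k - 2) with hi' | hi'
      · exact hmoment i hi'
      · obtain rfl : i = k - 2 := by omega
        simpa [ht] using hrow₂
    · exact eq_zero_of_hammingNorm_le_of_sum_mul_pow_eq_zero hα (m := k - 2)
        (by simp [ht] at hweight; omega) hmoment
  have ht : t = 0 := by simpa [hb] using hrow₂
  have hs : c (Fin.last n).castSucc = 0 := by simpa [hb, ht] using hrow₁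
  have ha (j : Fin n) : c j.castSucc.castSucc = 0 :=
    (mul_eq_zero.1 (congrFun hb j)).resolve_left (hv j)
  ext j
  induction j using Fin.lastCases with
  | last => exact ht
  | cast j =>
    induction j using Fin.lastCases with
    | last => exact hs
    | cast j => exact ha j

end Gkmat

theorem stmt_14_general (F : Type*) [Field F] [DecidableEq F] (n k : ℕ)
    (hk : 3 ≤ k)
    (α v : Fin n → F) (hα : Function.Injective α) (hv : ∀ i, v i ≠ 0) (δ : F) :
    (∀ S : Finset (Fin (n + 2)), S.card = k - 1 →
        LinearIndependent F
          (fun j : {x // x ∈ S} => fun i : Fin k => Gkmat F n k α v δ i j.1)) ∧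
      (∀ y ∈ dualCode (Submodule.span F (Set.range (Gkmat F n k α v δ))),
        y ≠ 0 → k ≤ hammingNorm y) := by
  have hker (c : Fin (n + 2) → F) (hc : hammingNorm c ≤ k - 1)
      (h : Matrix.of (Gkmat F n k α v δ) *ᵥ c = 0) : c = 0 :=
    eq_zero_of_Gkmat_mulVec_eq_zero (by omega) hα hv hc h
  refine ⟨fun S hS => linearIndepOn_cols_of_mulVec_eq_zero hker hS.le, fun y hy hy0 => ?_⟩
  by_contra hlt
  exact hy0 (hker y (by omega) (funext fun i => hy _ (Submodule.subset_span ⟨i, rfl⟩)))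

/-- Any `k-1` columns of `G_k` are linearly independent over `F`; consequently every
nonzero word of the dual code `C_k(A,v)^⊥` has Hamming weight at least `k`. -/
theorem stmt_14 (F : Type*) [Field F] [Fintype F] [DecidableEq F] (n k : ℕ)
    (hk : 3 ≤ k) (hkn : k ≤ n) (hnq : n ≤ Fintype.card F)
    (α v : Fin n → F) (hα : Function.Injective α) (hv : ∀ i, v i ≠ 0) (δ : F) :
    (∀ S : Finset (Fin (n + 2)), S.card = k - 1 →
        LinearIndependent F
          (fun j : {x // x ∈ S} => fun i : Fin k => Gkmat F n k α v δ i j.1)) ∧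
      (∀ y ∈ dualCode (Submodule.span F (Set.range (Gkmat F n k α v δ))),
        y ≠ 0 → k ≤ hammingNorm y) :=
  stmt_14_general F n k hk α v hα hv δ
end

section
/- Let k ≥ 3 and let α_1, …, α_{k−2} be elements of a field and δ an element of the same field. The determinant of the k×k matrix whose j-th column, for 1 ≤ j ≤ k−2, is (1, α_j, α_j^2, …, α_j^{k−2}, α_j^k)^T, whose (k−1)-th column is (0, …, 0, 0, 1)^T, and whose k-th column is (0, …, 0, 1, δ)^T equals −Π_{1≤i<j≤k−2}(α_j − α_i); in particular, if the α_i are pairwise distinct this matrix is nonsingular. -/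
/-! Splitting off the last two rows and columns, the matrix is block lower triangular, with the
transposed Vandermonde matrix of `α` and `!![0, 1; 1, δ]` (determinant `-1`) as diagonal blocks. -/

/-- The k×k matrix of the statement: columns `1 ≤ j ≤ k-2` are
`(1, α_j, α_j², …, α_j^{k-2}, α_j^k)ᵀ`, the `(k-1)`-th column is `(0, …, 0, 1)ᵀ`
and the `k`-th column is `(0, …, 0, 1, δ)ᵀ`. -/
noncomputable def M16 (F : Type*) [Field F] (k : ℕ) (α : Fin (k - 2) → F) (δ : F) :
    Matrix (Fin k) (Fin k) F :=
  Matrix.of fun i j =>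
    if hj : (j : ℕ) < k - 2 then
      α ⟨j, hj⟩ ^ (if (i : ℕ) = k - 1 then k else (i : ℕ))
    else if (j : ℕ) = k - 2 then (if (i : ℕ) = k - 1 then 1 else 0)
    else if (i : ℕ) = k - 2 then 1 else if (i : ℕ) = k - 1 then δ else 0

open Matrix

namespace M16

variable {F : Type*} [Field F] {n : ℕ} (α : Fin (n + 1) → F) (δ : F)

theorem submatrix_finSumFinEquiv :
    (M16 F (n + 3) α δ).submatrix (finSumFinEquiv (m := n + 1) (n := 2))
        (finSumFinEquiv (m := n + 1) (n := 2)) =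
      fromBlocks (vandermonde α)ᵀ 0
        (of fun (i : Fin 2) j => α j ^ (n + 1 + 2 * (i : ℕ))) !![0, 1; 1, δ] := by
  ext (i | i) (j | j) <;> (try fin_cases i) <;> (try fin_cases j) <;>
    simp only [submatrix_apply, finSumFinEquiv_apply_left, finSumFinEquiv_apply_right, M16, of_apply,
      fromBlocks_apply₁₁, fromBlocks_apply₁₂, fromBlocks_apply₂₁, fromBlocks_apply₂₂, Matrix.zero_apply,
      transpose_apply, vandermonde, Fin.val_castAdd, Fin.val_natAdd, Fin.zero_eta, Fin.mk_one,
      cons_val_zero, cons_val_one] <;>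
    grind

theorem det_eq_neg_det_vandermonde : (M16 F (n + 3) α δ).det = -(vandermonde α).det := by
  rw [← det_submatrix_equiv_self (finSumFinEquiv (m := n + 1) (n := 2)), submatrix_finSumFinEquiv,
    det_fromBlocks_zero₁₂, det_transpose, det_fin_two_of]
  ring

end M16

/-- The determinant of the above matrix equals `-∏_{i<j} (α_j - α_i)`; in particular,
if the `α_i` are pairwise distinct the matrix is nonsingular. -/
theorem stmt_16 (F : Type*) [Field F] (k : ℕ) (hk : 3 ≤ k)
    (α : Fin (k - 2) → F) (δ : F) :
    (M16 F k α δ).det = -(∏ i, ∏ j ∈ Finset.Ioi i, (α j - α i)) ∧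
      (Function.Injective α → (M16 F k α δ).det ≠ 0) := by
  obtain ⟨n, rfl⟩ : ∃ n, k = n + 3 := ⟨k - 3, by omega⟩
  rw [M16.det_eq_neg_det_vandermonde]
  exact ⟨congrArg Neg.neg (det_vandermonde α),
    fun hα => neg_ne_zero.mpr (det_vandermonde_ne_zero_iff.mpr hα)⟩
end
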